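/- arXiv:2506.01870 — 13 statements merged into one kernel-verified Lean document; each statement's English description precedes it below -/
import Mathlib

section
/- The infinite series ∑_{k=0}^∞ (63k²+78k+22)·8^k / ((2k+1)(6k+1)(6k+5)·C(6k,3k)) converges and equals 3π/2. -/
open MeasureTheory Set intervalIntegral Real

lemma beta_nat (b a : ℕ) : (∫ x in (0:ℝ)..1, x ^ a * (1 - x) ^ b)
    = (a.factorial : ℝ) * b.factorial / (a + b + 1).factorial := by
  induction b generalizing a with
  | zero =>
      simp only [pow_zero, mul_one, integral_pow, one_pow, Nat.factorial_zero,
        Nat.cast_one, Nat.add_zero]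
      rw [show a + 0 + 1 = a + 1 from rfl, Nat.factorial_succ]
      push_cast
      rw [zero_pow (by omega)]
      field_simp
      norm_num
  | succ b ih =>
      have key := intervalIntegral.integral_mul_deriv_eq_deriv_mul_of_hasDerivAt
        (u := fun x : ℝ => (1 - x) ^ (b + 1))
        (v := fun x : ℝ => x ^ (a + 1) / (a + 1))
        (u' := fun x : ℝ => -((b + 1 : ℝ) * (1 - x) ^ b))
        (v' := fun x : ℝ => x ^ a) (a := (0:ℝ)) (b := 1)
        (by fun_prop) (by fun_prop)
        (fun x _ => by
          have h1 : HasDerivAt (fun x : ℝ => 1 - x) (-1) x := by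
            simpa using (hasDerivAt_id x).const_sub 1
          have := h1.pow (b + 1)
          refine this.congr_deriv ?_
          rw [Nat.add_sub_cancel]; push_cast; ring)
        (fun x _ => by
          have := (hasDerivAt_pow (a + 1) x).div_const (a + 1 : ℝ)
          convert this using 1
          have ha : (a : ℝ) + 1 ≠ 0 := by positivity
          push_cast
          field_simp)
        ((by fun_prop : Continuous fun x : ℝ => -((b + 1 : ℝ) * (1 - x) ^ b)).intervalIntegrable 0 1)
        ((by fun_prop : Continuous fun x : ℝ => x ^ a).intervalIntegrable 0 1)
      have hmc : (∫ x in (0:ℝ)..1, x ^ a * (1 - x) ^ (b+1))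
          = ∫ x in (0:ℝ)..1, (1 - x) ^ (b+1) * x ^ a := by
        congr 1; ext x; ring
      rw [hmc, key]
      have h2 : (∫ x in (0:ℝ)..1, -((b + 1 : ℝ) * (1 - x) ^ b) * (x ^ (a+1) / (a+1)))
          = (-((b+1:ℝ)/(a+1))) * ∫ x in (0:ℝ)..1, x ^ (a+1) * (1 - x) ^ b := by
        rw [← intervalIntegral.integral_const_mul]
        congr 1; ext x
        field_simp
      rw [h2, ih (a+1)]
      simp only [sub_self, sub_zero, one_pow, zero_pow (Nat.succ_ne_zero b),
        zero_pow (Nat.succ_ne_zero a), zero_mul, mul_zero, zero_div, sub_zero, zero_sub]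
      have hfac1 : ((b+1).factorial : ℝ) = (b+1) * b.factorial := by
        rw [Nat.factorial_succ]; push_cast; ring
      have hfac2 : ((a+1).factorial : ℝ) = (a+1) * a.factorial := by
        rw [Nat.factorial_succ]; push_cast; ring
      have hidx : a + 1 + b + 1 = a + (b + 1) + 1 := by omega
      rw [hidx, hfac2, hfac1]
      have hca : (a:ℝ) + 1 ≠ 0 := by positivity
      have hfa : ((a + (b+1) + 1).factorial : ℝ) ≠ 0 := by
        exact_mod_cast (Nat.factorial_pos _).ne'
      field_simp

lemma J_int (n : ℕ) : (∫ x in (0:ℝ)..1, (x * (1 - x)) ^ n)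
    = ((n.factorial : ℝ))^2 / (2 * n + 1).factorial := by
  simp_rw [mul_pow]
  rw [beta_nat, show n + n + 1 = 2 * n + 1 by omega]
  ring

lemma term_eq (k : ℕ) : (∫ x in (0:ℝ)..1,
      (3 + 6 * (x * (1 - x)) + 12 * (x * (1 - x)) ^ 2) * (8 * (x * (1 - x)) ^ 3) ^ k)
    = (63 * (k : ℝ) ^ 2 + 78 * k + 22) * 8 ^ k /
        ((2 * (k : ℝ) + 1) * (6 * k + 1) * (6 * k + 5) * (Nat.choose (6 * k) (3 * k))) := by
  have hfun : (fun x : ℝ => (3 + 6 * (x * (1 - x)) + 12 * (x * (1 - x)) ^ 2)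
        * (8 * (x * (1 - x)) ^ 3) ^ k)
      = fun x : ℝ => 3 * 8 ^ k * (x * (1 - x)) ^ (3 * k)
        + (6 * 8 ^ k * (x * (1 - x)) ^ (3 * k + 1)
        + 12 * 8 ^ k * (x * (1 - x)) ^ (3 * k + 2)) := by
    funext x
    rw [mul_pow 8 ((x * (1 - x)) ^ 3) k, ← pow_mul]
    ring
  rw [intervalIntegral.integral_congr (fun x _ => congrFun hfun x)]
  have i1 : IntervalIntegrable (fun x : ℝ => 3 * 8 ^ k * (x * (1-x)) ^ (3*k)) volume 0 1 := by
    apply Continuous.intervalIntegrable; fun_prop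
  have i2 : IntervalIntegrable (fun x : ℝ => 6 * 8 ^ k * (x * (1-x)) ^ (3*k+1)) volume 0 1 := by
    apply Continuous.intervalIntegrable; fun_prop
  have i3 : IntervalIntegrable (fun x : ℝ => 12 * 8 ^ k * (x * (1-x)) ^ (3*k+2)) volume 0 1 := by
    apply Continuous.intervalIntegrable; fun_prop
  rw [intervalIntegral.integral_add i1 (i2.add i3), intervalIntegral.integral_add i2 i3]
  simp_rw [mul_assoc, intervalIntegral.integral_const_mul, J_int]
  -- now a pure factorial identity
  have hC : ((Nat.choose (6*k) (3*k) : ℝ)) * (3*k).factorial * (3*k).factorial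
      = (6*k).factorial := by
    have h := Nat.choose_mul_factorial_mul_factorial (show 3*k ≤ 6*k by omega)
    rw [show 6*k - 3*k = 3*k by omega] at h
    exact_mod_cast h
  have f1 : ((2*(3*k)+1).factorial : ℝ) = (6*k+1) * (6*k).factorial := by
    rw [show 2*(3*k)+1 = (6*k)+1 by omega, Nat.factorial_succ]; push_cast; ring
  have f2 : ((2*(3*k+1)+1).factorial : ℝ)
      = (6*k+3) * ((6*k+2) * ((6*k+1) * (6*k).factorial)) := by
    rw [show 2*(3*k+1)+1 = (6*k+2)+1 by omega, Nat.factorial_succ,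
      show 6*k+2 = (6*k+1)+1 by omega, Nat.factorial_succ,
      show 6*k+1 = (6*k)+1 by omega, Nat.factorial_succ]
    push_cast; ring
  have f3 : ((2*(3*k+2)+1).factorial : ℝ)
      = (6*k+5) * ((6*k+4) * ((6*k+3) * ((6*k+2) * ((6*k+1) * (6*k).factorial)))) := by
    rw [show 2*(3*k+2)+1 = (6*k+4)+1 by omega, Nat.factorial_succ,
      show 6*k+4 = (6*k+3)+1 by omega, Nat.factorial_succ,
      show 6*k+3 = (6*k+2)+1 by omega, Nat.factorial_succ,
      show 6*k+2 = (6*k+1)+1 by omega, Nat.factorial_succ,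
      show 6*k+1 = (6*k)+1 by omega, Nat.factorial_succ]
    push_cast; ring
  have g1 : (((3*k)+1).factorial : ℝ) = (3*k+1) * (3*k).factorial := by
    rw [Nat.factorial_succ]; push_cast; ring
  have g2 : (((3*k)+2).factorial : ℝ) = (3*k+2) * ((3*k+1) * (3*k).factorial) := by
    rw [show (3*k)+2 = ((3*k)+1)+1 by omega, Nat.factorial_succ]
    push_cast [g1]; ring
  rw [f1, f2, f3, g1, g2]
  have hCpos : (0:ℝ) < (Nat.choose (6*k) (3*k) : ℝ) := by
    exact_mod_cast Nat.choose_pos (show 3*k ≤ 6*k by omega)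
  have hF0 : (0:ℝ) < ((3*k).factorial : ℝ) := by exact_mod_cast Nat.factorial_pos _
  have hG : (0:ℝ) < ((6*k).factorial : ℝ) := by exact_mod_cast Nat.factorial_pos _
  have e1 : (0:ℝ) < 2*(k:ℝ)+1 := by positivity
  have e2 : (0:ℝ) < 6*(k:ℝ)+1 := by positivity
  have e3 : (0:ℝ) < 6*(k:ℝ)+5 := by positivity
  have e4 : (0:ℝ) < 6*(k:ℝ)+2 := by positivity
  have e5 : (0:ℝ) < 6*(k:ℝ)+3 := by positivity
  have e6 : (0:ℝ) < 6*(k:ℝ)+4 := by positivity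
  have hCeq : ((Nat.choose (6*k) (3*k) : ℝ))
      = (6*k).factorial / ((3*k).factorial * (3*k).factorial) := by
    field_simp
    linarith [hC]
  rw [hCeq]
  have h63 : (6*(k:ℝ)+3) = 3*(2*k+1) := by ring
  field_simp
  ring

theorem series_stmt_0 :
    HasSum (fun k : ℕ =>
      (63 * (k : ℝ) ^ 2 + 78 * k + 22) * 8 ^ k /
        ((2 * (k : ℝ) + 1) * (6 * k + 1) * (6 * k + 5) * (Nat.choose (6 * k) (3 * k))))
      (3 * Real.pi / 2) := by
  set F : ℕ → ℝ → ℝ := fun k x =>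
    (3 + 6 * (x * (1 - x)) + 12 * (x * (1 - x)) ^ 2) * (8 * (x * (1 - x)) ^ 3) ^ k with hF
  have hcont : ∀ k, Continuous (F k) := fun k => by fun_prop
  have hbound : ∀ (k : ℕ), ∀ x ∈ Set.Ioc (0:ℝ) 1,
      0 ≤ F k x ∧ F k x ≤ 21/4 * (1/8)^k := by
    intro k x hx
    obtain ⟨hx0, hx1⟩ := hx
    have hw0 : 0 ≤ x * (1-x) := by nlinarith
    have hw1 : x * (1-x) ≤ 1/4 := by nlinarith [sq_nonneg (2*x-1)]
    have hw3 : (x*(1-x))^3 ≤ (1/4)^3 := by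
      exact pow_le_pow_left₀ hw0 hw1 3
    have hr0 : (0:ℝ) ≤ 8 * (x*(1-x))^3 := by positivity
    have hr1 : 8 * (x*(1-x))^3 ≤ 1/8 := by nlinarith
    refine ⟨by positivity, ?_⟩
    have h1 : (8*(x*(1-x))^3)^k ≤ (1/8)^k := pow_le_pow_left₀ hr0 hr1 k
    have h2 : 3 + 6*(x*(1-x)) + 12*(x*(1-x))^2 ≤ 21/4 := by nlinarith
    exact mul_le_mul h2 h1 (by positivity) (by norm_num)
  have hint : ∀ k, MeasureTheory.IntegrableOn (F k) (Set.Ioc (0:ℝ) 1) :=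
    fun k => ((hcont k).intervalIntegrable 0 1).1
  have hnorm : ∀ k : ℕ, (∫ x in Set.Ioc (0:ℝ) 1, ‖F k x‖) ≤ 21/4 * (1/8)^k := by
    intro k
    have hle : ∀ x ∈ Set.Ioc (0:ℝ) 1, ‖F k x‖ ≤ 21/4*(1/8)^k := fun x hx => by
      rw [Real.norm_of_nonneg (hbound k x hx).1]; exact (hbound k x hx).2
    have h1 := MeasureTheory.setIntegral_mono_on (hint k).norm
      (MeasureTheory.integrableOn_const (by simp [Real.volume_Ioc]))
      measurableSet_Ioc hle
    have h2 : (∫ _x in Set.Ioc (0:ℝ) 1, (21/4*(1/8)^k : ℝ)) = 21/4*(1/8)^k := by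
      simp [Real.volume_Ioc]
    linarith
  have hsummable : Summable (fun k => ∫ x in Set.Ioc (0:ℝ) 1, ‖F k x‖) :=
    Summable.of_nonneg_of_le
      (fun k => MeasureTheory.integral_nonneg fun x => norm_nonneg _) hnorm
      ((summable_geometric_of_lt_one (by norm_num) (by norm_num)).mul_left _)
  have hHasSum := MeasureTheory.hasSum_integral_of_summable_integral_norm
      (μ := MeasureTheory.volume.restrict (Set.Ioc (0:ℝ) 1)) hint hsummable
  have htsum : ∀ x ∈ Set.Ioc (0:ℝ) 1, (∑' k, F k x) = 3 / (2*x^2 - 2*x + 1) := by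
    intro x hx
    obtain ⟨hx0, hx1⟩ := hx
    have hw0 : 0 ≤ x * (1-x) := by nlinarith
    have hw1 : x * (1-x) ≤ 1/4 := by nlinarith [sq_nonneg (2*x-1)]
    have hw3 : (x*(1-x))^3 ≤ (1/4)^3 := by
      exact pow_le_pow_left₀ hw0 hw1 3
    have hr0 : (0:ℝ) ≤ 8 * (x*(1-x))^3 := by positivity
    have hr1 : 8 * (x*(1-x))^3 ≤ 1/8 := by nlinarith
    have hg := hasSum_geometric_of_lt_one hr0 (lt_of_le_of_lt hr1 (by norm_num))
    have htg := (hg.mul_left (3 + 6*(x*(1-x)) + 12*(x*(1-x))^2)).tsum_eq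
    rw [hF]
    simp only []
    rw [htg]
    have hden : (0:ℝ) < 2*x^2-2*x+1 := by nlinarith [sq_nonneg (2*x-1)]
    have hden2 : (0:ℝ) < 1 - 8*(x*(1-x))^3 := by nlinarith
    rw [inv_eq_one_div]
    rw [mul_one_div, div_eq_div_iff hden2.ne' hden.ne']
    ring
  have hIeq : (∫ x in Set.Ioc (0:ℝ) 1, (∑' k, F k x))
      = ∫ x in Set.Ioc (0:ℝ) 1, 3/(2*x^2-2*x+1) :=
    MeasureTheory.setIntegral_congr_fun measurableSet_Ioc htsum
  have hcont2 : Continuous fun x : ℝ => 3/(2*x^2-2*x+1) := by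
    apply Continuous.div continuous_const (by fun_prop)
    intro x
    nlinarith [sq_nonneg (2*x-1)]
  have harc : (∫ x in (0:ℝ)..1, 3/(2*x^2-2*x+1)) = 3 * Real.pi / 2 := by
    have hd : ∀ x ∈ Set.uIcc (0:ℝ) 1,
        HasDerivAt (fun y : ℝ => 3 * Real.arctan (2*y-1)) (3/(2*x^2-2*x+1)) x := by
      intro x _
      have h1 : HasDerivAt (fun y : ℝ => 2*y-1) 2 x := by
        simpa using ((hasDerivAt_id x).const_mul 2).sub_const 1
      have h2 := (Real.hasDerivAt_arctan (2*x-1)).comp x h1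
      have h3 := h2.const_mul 3
      refine h3.congr_deriv ?_
      have hden : (2*x^2-2*x+1) ≠ 0 := by nlinarith [sq_nonneg (2*x-1)]
      have hxx : 1+(2*x-1)^2 = 2*(2*x^2-2*x+1) := by ring
      rw [hxx]
      field_simp
    rw [intervalIntegral.integral_eq_sub_of_hasDerivAt hd (hcont2.intervalIntegrable 0 1)]
    norm_num [Real.arctan_one, Real.arctan_neg]
    ring
  have hfinal : (∫ x in Set.Ioc (0:ℝ) 1, (∑' k, F k x)) = 3 * Real.pi / 2 := by
    rw [hIeq, ← intervalIntegral.integral_of_le zero_le_one, harc]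
  rw [hfinal] at hHasSum
  have hterm : (fun k : ℕ => ∫ x in Set.Ioc (0:ℝ) 1, F k x)
      = fun k : ℕ => (63 * (k : ℝ) ^ 2 + 78 * k + 22) * 8 ^ k /
        ((2 * (k : ℝ) + 1) * (6 * k + 1) * (6 * k + 5) * (Nat.choose (6 * k) (3 * k))) := by
    funext k
    rw [← intervalIntegral.integral_of_le zero_le_one]
    exact term_eq k
  rwa [hterm] at hHasSum
end

section
/- The infinite series ∑_{k=0}^∞ (6k-1)(42k-1)·C(6k,3k) / 4096^k converges and equals 32√3/27. -/
open Set Finset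

noncomputable def dd (n : ℕ) : ℝ :=
  (2*n+1)*(2*n+3)*(Nat.centralBinom n)/(3*16^n)

noncomputable def cc (n : ℕ) : ℝ :=
  (2*n+1)*(2*n+3)*(Nat.centralBinom n)*(Nat.factorial n)/3

lemma cc_succ (n : ℕ) : cc (n+1) = cc n * (4*n+10) := by
  have h := Nat.succ_mul_centralBinom_succ n
  have h' : ((n:ℝ)+1) * (Nat.centralBinom (n+1) : ℝ) = 2*(2*n+1)*(Nat.centralBinom n) := by
    exact_mod_cast h
  simp only [cc, Nat.factorial_succ]
  push_cast
  have hn : ((n:ℝ)+1) ≠ 0 := by positivity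
  field_simp
  linear_combination ((2*(n:ℝ)+3)*(2*n+5)) * h'

lemma hpos {x : ℝ} (hx : x ∈ Icc (0:ℝ) (1/16)) : 0 < 1 - 4*x := by
  have := hx.2; linarith

lemma hasDerivAt_aux (n : ℕ) {x : ℝ} (hx : 0 < 1 - 4*x) :
    HasDerivAt (fun y : ℝ => cc n * (1-4*y) ^ (-(5:ℝ)/2 - n))
      (cc (n+1) * (1-4*x) ^ (-(5:ℝ)/2 - (n+1))) x := by
  have h1 : HasDerivAt (fun y : ℝ => 1 - 4*y) (-4) x := by
    simpa using ((hasDerivAt_id x).const_mul (4:ℝ)).const_sub 1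
  have h2 := h1.rpow_const (p := -(5:ℝ)/2 - n) (Or.inl hx.ne')
  have h3 := h2.const_mul (cc n)
  refine h3.congr_deriv ?_
  rw [cc_succ]
  rw [show -(5:ℝ)/2 - (n+1) = (-(5:ℝ)/2 - n) - 1 by ring]
  ring

lemma iter_deriv (n : ℕ) : ∀ x ∈ Icc (0:ℝ) (1/16),
    iteratedDerivWithin n (fun y : ℝ => (1-4*y) ^ (-(5:ℝ)/2 : ℝ)) (Icc (0:ℝ) (1/16)) x
      = cc n * (1-4*x) ^ (-(5:ℝ)/2 - n) := by
  have hu : UniqueDiffOn ℝ (Icc (0:ℝ) (1/16)) := uniqueDiffOn_Icc (by norm_num)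
  induction n with
  | zero =>
    intro x hx
    simp [iteratedDerivWithin_zero, cc, Nat.centralBinom]
  | succ n ih =>
    intro x hx
    rw [iteratedDerivWithin_succ]
    rw [derivWithin_congr ih (ih x hx)]
    rw [((hasDerivAt_aux n (hpos hx)).hasDerivWithinAt).derivWithin (hu x hx)]
    push_cast
    ring_nf

lemma sqrt3_sq : (Real.sqrt 3)^2 = 3 := Real.sq_sqrt (by norm_num)

lemma sqrt3_lt_two : Real.sqrt 3 < 2 := by
  nlinarith [sqrt3_sq, Real.sqrt_nonneg 3]

lemma val34 : ((3:ℝ)/4) ^ (-(5:ℝ)/2 : ℝ) = 32*Real.sqrt 3/27 := by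
  have ha : (0:ℝ) ≤ Real.sqrt 3/2 := by positivity
  have h34 : ((3:ℝ)/4) = (Real.sqrt 3/2)^(2:ℕ) := by
    rw [div_pow, Real.sq_sqrt] <;> norm_num
  have h3 : Real.sqrt 3 > 0 := by positivity
  rw [h34, ← Real.rpow_natCast (Real.sqrt 3/2) 2, ← Real.rpow_mul ha]
  norm_num
  have h5 : (Real.sqrt 3/2)^(5:ℕ) = 9*Real.sqrt 3/32 := by
    have : (Real.sqrt 3/2)^(5:ℕ) = ((Real.sqrt 3)^2)^2 * Real.sqrt 3 / 32 := by ring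
    rw [this, sqrt3_sq]; norm_num
  rw [h5]
  rw [show (9*Real.sqrt 3/32)⁻¹ = 32/(9*Real.sqrt 3) by rw [inv_div]]
  rw [div_eq_div_iff (by positivity) (by norm_num)]
  nlinarith [sqrt3_sq]

lemma ff_contDiffOn (N : ℕ) :
    ContDiffOn ℝ N (fun y : ℝ => (1-4*y) ^ (-(5:ℝ)/2 : ℝ)) (Icc (0:ℝ) (1/16)) := by
  intro x hx
  have h1 : ContDiffAt ℝ N (fun y : ℝ => 1 - 4*y) x :=
    (contDiffAt_const.sub (contDiffAt_id.const_smul (4:ℝ)))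
  exact (h1.rpow_const_of_ne (hpos hx).ne').contDiffWithinAt

lemma ff_iter_diffOn (N : ℕ) :
    DifferentiableOn ℝ
      (iteratedDerivWithin N (fun y : ℝ => (1-4*y) ^ (-(5:ℝ)/2 : ℝ)) (Icc (0:ℝ) (1/16)))
      (Ioo (0:ℝ) (1/16)) := by
  apply DifferentiableOn.congr
    (f := fun x : ℝ => cc N * (1-4*x) ^ (-(5:ℝ)/2 - N))
  · intro x hx
    have hx' : x ∈ Icc (0:ℝ) (1/16) := Ioo_subset_Icc_self hx
    exact ((hasDerivAt_aux N (hpos hx')).differentiableAt).differentiableWithinAt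
  · intro x hx
    exact iter_deriv N x (Ioo_subset_Icc_self hx)

lemma taylor_eq (N : ℕ) :
    taylorWithinEval (fun y : ℝ => (1-4*y) ^ (-(5:ℝ)/2 : ℝ)) N (Icc (0:ℝ) (1/16)) 0 (1/16)
      = ∑ k ∈ range (N+1), dd k := by
  rw [taylor_within_apply]
  apply Finset.sum_congr rfl
  intro k _
  have h0 : (0:ℝ) ∈ Icc (0:ℝ) (1/16) := by constructor <;> norm_num
  rw [iter_deriv k 0 h0]
  have : (1 - 4*(0:ℝ)) ^ (-(5:ℝ)/2 - k) = 1 := by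
    norm_num
  rw [this, mul_one, smul_eq_mul, dd, cc]
  have hk : (Nat.factorial k : ℝ) ≠ 0 := by positivity
  field_simp
  rw [show (1 - 16*(0:ℝ))/16 = 1/16 by norm_num, mul_comm ((1/16:ℝ)^k), mul_assoc, ← mul_pow]; norm_num

lemma nat_bound (N : ℕ) : ((2*N+3)*(2*N+5) : ℕ) ≤ 35*2^N := by
  induction N with
  | zero => norm_num
  | succ n ih =>
    have h2 : n < 2^n := Nat.lt_two_pow_self
    have : (2*(n+1)+3)*(2*(n+1)+5) = (2*n+3)*(2*n+5) + 4*(2*n+5) := by ring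
    rw [this, pow_succ]
    omega

lemma cb_le (n : ℕ) : (Nat.centralBinom n : ℝ) ≤ 4^n := by
  have h1 : Nat.centralBinom n ≤ (2*n+1).choose n :=
    Nat.choose_le_choose n (by omega)
  have h2 := Nat.choose_middle_le_pow n
  exact_mod_cast h1.trans h2

lemma dd_nonneg (n : ℕ) : 0 ≤ dd n := by
  unfold dd; positivity

lemma dd_cc (m : ℕ) : cc m / (Nat.factorial m) * (1/16)^m = dd m := by
  unfold dd cc
  have hk : (Nat.factorial m : ℝ) ≠ 0 := by positivity
  field_simp
  rw [mul_assoc, ← mul_pow]; norm_num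

lemma hb (N : ℕ) : |(∑ k ∈ range (N+1), dd k) - 32*Real.sqrt 3/27| ≤ 35/3*(2/3:ℝ)^N := by
  obtain ⟨x', hx', hR⟩ := taylor_mean_remainder_lagrange (f := fun y : ℝ => (1-4*y) ^ (-(5:ℝ)/2 : ℝ)) (n := N)
    (show (0:ℝ) ≠ 1/16 by norm_num)
    (by rw [Set.uIcc_of_le (by norm_num)]; exact ff_contDiffOn (N := N))
    (by rw [Set.uIcc_of_le (by norm_num), uIoo_of_le (by norm_num)]; exact ff_iter_diffOn N)
  rw [Set.uIcc_of_le (by norm_num : (0:ℝ) ≤ 1/16)] at hR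
  rw [uIoo_of_le (by norm_num : (0:ℝ) ≤ 1/16)] at hx'
  rw [taylor_eq N, iter_deriv (N+1) x' (Ioo_subset_Icc_self hx')] at hR
  have hval : (1 - 4*(1/16:ℝ)) ^ (-(5:ℝ)/2 : ℝ) = 32*Real.sqrt 3/27 := by
    rw [show (1 - 4*(1/16:ℝ)) = 3/4 by norm_num]; exact val34
  rw [hval] at hR
  push_cast at hR
  rw [abs_sub_comm, hR]
  set e : ℝ := -(5:ℝ)/2 - (N+1) with he
  have hx1 : 0 < x' := hx'.1
  have hx2 : x' < 1/16 := hx'.2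
  have hpos' : (0:ℝ) < 1 - 4*x' := by linarith
  have h34 : (3/4:ℝ) ≤ 1 - 4*x' := by linarith
  have hene : e ≤ 0 := by
    have : (0:ℝ) ≤ (N:ℝ) + 1 := by positivity
    rw [he]; linarith
  have hBB : (1-4*x') ^ e ≤ (3/4:ℝ) ^ e :=
    Real.rpow_le_rpow_of_nonpos (by norm_num) h34 hene
  have hsplit : (3/4:ℝ) ^ e = (3/4:ℝ)^(-(5:ℝ)/2 : ℝ) * (4/3:ℝ)^(N+1) := by
    rw [show e = -(5:ℝ)/2 + (-((N+1:ℕ):ℝ)) by rw [he]; push_cast; ring,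
      Real.rpow_add (by norm_num), Real.rpow_neg (by norm_num), Real.rpow_natCast,
      ← inv_pow, show ((3:ℝ)/4)⁻¹ = 4/3 by norm_num]
  have hB3 : (3/4:ℝ)^(-(5:ℝ)/2 : ℝ) ≤ 3 := by
    rw [val34]
    nlinarith [sqrt3_lt_two, Real.sqrt_nonneg 3]
  have hBnn : (0:ℝ) ≤ (1-4*x') ^ e := Real.rpow_nonneg hpos'.le e
  have hB1 : (1-4*x') ^ e ≤ 3 * (4/3:ℝ)^(N+1) := by
    calc (1-4*x') ^ e ≤ (3/4:ℝ) ^ e := hBB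
      _ = (3/4:ℝ)^(-(5:ℝ)/2 : ℝ) * (4/3:ℝ)^(N+1) := hsplit
      _ ≤ 3 * (4/3:ℝ)^(N+1) := by
          have : (0:ℝ) ≤ (4/3:ℝ)^(N+1) := by positivity
          nlinarith
  -- rewrite remainder as dd (N+1) * (1-4x')^e
  have hform : cc (N+1) * (1-4*x')^e * (1/16 - 0)^(N+1) / (Nat.factorial (N+1))
      = dd (N+1) * (1-4*x')^e := by
    rw [← dd_cc (N+1)]
    ring
  rw [hform]
  have hA1 : dd (N+1) ≤ 35*2^N/3 * (1/4:ℝ)^(N+1) := by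
    have h1 : (Nat.centralBinom (N+1) : ℝ) ≤ 4^(N+1) := cb_le (N+1)
    have h2 : (((2*N+3)*(2*N+5) : ℕ):ℝ) ≤ ((35*2^N : ℕ):ℝ) := by exact_mod_cast nat_bound N
    push_cast at h2
    have hmul := mul_le_mul h2 h1 (by positivity) (by positivity)
    unfold dd
    rw [div_le_iff₀ (by positivity)]
    have hr : 35*2^N/3 * (1/4:ℝ)^(N+1) * (3*16^(N+1)) = 35*2^N*4^(N+1) := by
      rw [show (1/4:ℝ)^(N+1) = 4^(N+1)/16^(N+1) by rw [← div_pow]; norm_num]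
      field_simp
    rw [hr]
    push_cast
    nlinarith [hmul]
  have hAnn : 0 ≤ dd (N+1) := dd_nonneg (N+1)
  have final : dd (N+1) * (1-4*x')^e ≤ (35*2^N/3 * (1/4:ℝ)^(N+1)) * (3 * (4/3:ℝ)^(N+1)) := by
    apply mul_le_mul hA1 hB1 hBnn (by positivity)
  rw [abs_of_nonneg (by positivity)]
  refine final.trans (le_of_eq ?_)
  have h14 : (1/4:ℝ)^(N+1) * (4/3:ℝ)^(N+1) = (1/3:ℝ)^(N+1) := by
    rw [← mul_pow]; norm_num
  calc (35*2^N/3 * (1/4:ℝ)^(N+1)) * (3 * (4/3:ℝ)^(N+1))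
      = 35 * 2^N * ((1/4:ℝ)^(N+1) * (4/3:ℝ)^(N+1)) := by ring
    _ = 35 * 2^N * (1/3:ℝ)^(N+1) := by rw [h14]
    _ = 35/3 * (2/3:ℝ)^N := by
        rw [pow_succ, show (2/3:ℝ)^N = 2^N*(1/3:ℝ)^N by rw [← mul_pow]; norm_num]
        ring

lemma hasSum_dd : HasSum dd (32*Real.sqrt 3/27) := by
  rw [hasSum_iff_tendsto_nat_of_nonneg dd_nonneg]
  rw [← Filter.tendsto_add_atTop_iff_nat 1]
  have h0 : Filter.Tendsto (fun N : ℕ => (35:ℝ)/3*(2/3)^N) Filter.atTop (nhds 0) := by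
    have := tendsto_pow_atTop_nhds_zero_of_lt_one (show (0:ℝ) ≤ 2/3 by norm_num)
      (show (2/3:ℝ) < 1 by norm_num)
    simpa using this.const_mul ((35:ℝ)/3)
  have hsq := squeeze_zero_norm
    (f := fun N : ℕ => (∑ k ∈ range (N+1), dd k) - 32*Real.sqrt 3/27)
    (fun N => by simpa [Real.norm_eq_abs] using hb N) h0
  exact tendsto_sub_nhds_zero_iff.mp hsq

lemma step_id (q : ℕ) :
    (6 * ((q+1 : ℕ) : ℝ) - 1) * (42 * ((q+1:ℕ):ℝ) - 1) *
      (Nat.choose (6 * (q+1)) (3 * (q+1))) / 4096 ^ (q+1)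
    = dd (3*q+1) + dd (3*q+2) + dd (3*q+3) := by
  have hcb : (Nat.choose (6 * (q+1)) (3 * (q+1)) : ℝ) = (Nat.centralBinom (3*q+3) : ℝ) := by
    unfold Nat.centralBinom
    congr 2 <;> ring
  have h1 := Nat.succ_mul_centralBinom_succ (3*q+1)
  have h2 := Nat.succ_mul_centralBinom_succ (3*q+2)
  have h1' : ((3*q+2 : ℕ):ℝ) * (Nat.centralBinom (3*q+2) : ℝ)
      = 2*(2*(3*q+1)+1) * (Nat.centralBinom (3*q+1) : ℝ) := by exact_mod_cast h1
  have h2' : ((3*q+3 : ℕ):ℝ) * (Nat.centralBinom (3*q+3) : ℝ)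
      = 2*(2*(3*q+2)+1) * (Nat.centralBinom (3*q+2) : ℝ) := by exact_mod_cast h2
  push_cast at h1' h2'
  have e1 : (Nat.centralBinom (3*q+2) : ℝ)
      = 2*(6*q+3) * (Nat.centralBinom (3*q+1) : ℝ) / (3*q+2) := by
    rw [eq_div_iff (by positivity)]
    linear_combination h1'
  have e2 : (Nat.centralBinom (3*q+3) : ℝ)
      = 2*(6*q+5) * (Nat.centralBinom (3*q+2) : ℝ) / (3*q+3) := by
    rw [eq_div_iff (by positivity)]
    linear_combination h2'
  have h4096 : (4096:ℝ)^(q+1) = 16^(3*q+3) := by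
    rw [show (4096:ℝ) = 16^3 by norm_num, ← pow_mul]
    ring_nf
  rw [hcb, h4096]
  unfold dd
  rw [e2, e1]
  push_cast
  have p1 : ((3:ℝ)*q+2) ≠ 0 := by positivity
  have p2 : ((3:ℝ)*q+3) ≠ 0 := by positivity
  have p3 : (16:ℝ)^(3*q+1) ≠ 0 := by positivity
  have hp2 : (16:ℝ)^(3*q+2) = 16^(3*q+1)*16 := by rw [pow_succ]
  have hp3 : (16:ℝ)^(3*q+3) = 16^(3*q+1)*256 := by
    rw [show 3*q+3 = (3*q+1)+2 by ring, pow_add]; norm_num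
  rw [hp2, hp3]
  field_simp
  ring

theorem series_stmt_1 :
    HasSum (fun k : ℕ =>
      (6 * (k : ℝ) - 1) * (42 * k - 1) * (Nat.choose (6 * k) (3 * k)) / 4096 ^ k)
      (32 * Real.sqrt 3 / 27) := by
  set t : ℕ → ℝ := fun k =>
    (6 * (k : ℝ) - 1) * (42 * k - 1) * (Nat.choose (6 * k) (3 * k)) / 4096 ^ k with ht
  have h1 : HasSum (fun n => dd (n+1)) (32 * Real.sqrt 3 / 27 - dd 0) := by
    apply (hasSum_nat_add_iff (f := dd) 1).2
    convert hasSum_dd using 1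
    · rfl
    simp
  have h2 := (Nat.divModEquiv 3).symm.hasSum_iff.mpr h1
  have h3 : HasSum (fun q : ℕ => dd (q*3+1) + dd (q*3+2) + dd (q*3+3))
      (32 * Real.sqrt 3 / 27 - dd 0) := by
    refine h2.prod_fiberwise fun q => ?_
    convert hasSum_fintype (fun r : Fin 3 => dd (q*3 + (r:ℕ) + 1)) using 1
    · rfl
    rw [Fin.sum_univ_three]
    norm_num
  have h4 : HasSum (fun q : ℕ => t (q+1)) (32 * Real.sqrt 3 / 27 - dd 0) := by
    refine h3.congr_fun fun q => ?_
    rw [show q*3+1 = 3*q+1 by ring, show q*3+2 = 3*q+2 by ring, show q*3+3 = 3*q+3 by ring]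
    rw [← step_id q]
  have h5 := (hasSum_nat_add_iff (f := t) 1).1 h4
  convert h5 using 1
  · rfl
  have ht0 : t 0 = 1 := by
    rw [ht]
    norm_num
  have hdd0 : dd 0 = 1 := by
    unfold dd Nat.centralBinom
    norm_num
  simp [ht0, hdd0]
end

section
/- The infinite series ∑_{k=0}^∞ (42k+5)·C(6k,3k) / ((6k-5)·4096^k) converges and equals -4√3/9. -/
open Finset

noncomputable section
namespace Series2Aux

/-! ### Part 1: the convolution identity `∑_{i+j=n} C(2i,i)C(2j,j) = 4^n` -/

def v (n : ℕ) : ℝ := (Nat.centralBinom n : ℝ)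

lemma v_pos (n : ℕ) : 0 < v n := by
  unfold v; exact_mod_cast Nat.centralBinom_pos n

lemma v_rec (n : ℕ) : ((n:ℝ)+1) * v (n+1) = (4*n+2) * v n := by
  have h := congrArg (Nat.cast : ℕ → ℝ) (Nat.succ_mul_centralBinom_succ n)
  push_cast at h
  unfold v; linarith

def S (n : ℕ) : ℝ := ∑ i ∈ range (n+1), v i * v (n-i)

lemma sym (m : ℕ) :
    (2:ℝ) * ∑ i ∈ range (m+1), (i:ℝ) * (v i * v (m-i)) = m * S m := by
  have h := Finset.sum_range_reflect (fun i => (i:ℝ) * (v i * v (m-i))) (m+1)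
  simp only [show ∀ j:ℕ, m + 1 - 1 - j = m - j from fun j => by omega] at h
  have h2 : ∑ j ∈ range (m+1), ((m-j : ℕ):ℝ) * (v (m-j) * v (m-(m-j)))
      = ∑ j ∈ range (m+1), ((m:ℝ)-j) * (v j * v (m-j)) := by
    apply Finset.sum_congr rfl
    intro j hj
    have hjm : j ≤ m := Nat.lt_succ_iff.mp (mem_range.mp hj)
    rw [Nat.sub_sub_self hjm, Nat.cast_sub hjm]
    ring
  rw [h2] at h
  unfold S
  rw [Finset.mul_sum, Finset.mul_sum]
  have h3 : ∑ i ∈ range (m+1), (m:ℝ)*(v i * v (m-i))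
      = ∑ i ∈ range (m+1), ((m:ℝ)-i)*(v i * v (m-i))
        + ∑ i ∈ range (m+1), (i:ℝ)*(v i * v (m-i)) := by
    rw [← Finset.sum_add_distrib]
    apply Finset.sum_congr rfl
    intro j hj; ring
  rw [h3, h, ← Finset.sum_add_distrib]
  apply Finset.sum_congr rfl
  intro j hj; ring

lemma S_succ (n : ℕ) : S (n+1) = 4 * S n := by
  have e1 := sym (n+1)
  have e2 : ∑ i ∈ range (n+1+1), (i:ℝ)*(v i * v (n+1-i))
      = ∑ j ∈ range (n+1), ((4*(j:ℝ)+2)*v j)*v (n-j) := by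
    rw [Finset.sum_range_succ']
    simp only [Nat.cast_zero, zero_mul, add_zero, Nat.succ_sub_succ]
    apply Finset.sum_congr rfl
    intro j hj
    push_cast
    rw [← mul_assoc, show ((j:ℝ)+1)*v (j+1) = (4*j+2) * v j from v_rec j]
  have e4 : ∑ j ∈ range (n+1), ((4*(j:ℝ)+2)*v j)*v (n-j)
      = 4*(∑ j ∈ range (n+1), (j:ℝ)*(v j * v (n-j))) + 2 * S n := by
    unfold S
    rw [Finset.mul_sum, Finset.mul_sum, ← Finset.sum_add_distrib]
    apply Finset.sum_congr rfl
    intro j hj; ring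
  have e5 := sym n
  rw [e2, e4] at e1
  have hne : ((n:ℝ)+1) ≠ 0 := by positivity
  have : ((n:ℝ)+1) * S (n+1) = ((n:ℝ)+1) * (4 * S n) := by push_cast at e1 ⊢; linarith
  exact mul_left_cancel₀ hne this

lemma S_eq (n : ℕ) : S n = 4^n := by
  induction n with
  | zero => simp [S, v, Nat.centralBinom]
  | succ k ih => rw [S_succ, ih]; ring

/-! ### Part 2: `∑ C(2n,n)/16^n = 2√3/3` -/

lemma cb_le (n : ℕ) : Nat.centralBinom n ≤ 4^n := by
  have h1 : Nat.centralBinom n ≤ ∑ m ∈ range (2*n+1), (2*n).choose m :=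
    Finset.single_le_sum (f := fun m => (2*n).choose m) (fun i _ => Nat.zero_le _)
      (by simp [Nat.lt_succ_iff]; omega)
  rw [Nat.sum_range_choose] at h1
  calc Nat.centralBinom n ≤ 2^(2*n) := h1
    _ = 4^n := by rw [pow_mul]; norm_num

def g (n : ℕ) : ℝ := v n / 16^n

lemma g_le (n : ℕ) : ‖g n‖ ≤ (1/4:ℝ)^n := by
  unfold g
  rw [Real.norm_eq_abs, abs_of_pos (div_pos (v_pos n) (by positivity))]
  rw [div_le_iff₀ (by positivity)]
  calc v n ≤ (4:ℝ)^n := by unfold v; exact_mod_cast cb_le n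
    _ = (1/4)^n * 16^n := by rw [← mul_pow]; norm_num

lemma g_summable_norm : Summable fun n => ‖g n‖ :=
  Summable.of_nonneg_of_le (fun n => norm_nonneg _) g_le
    (summable_geometric_of_lt_one (by norm_num) (by norm_num))

lemma g_summable : Summable g := g_summable_norm.of_norm

lemma hA_real : HasSum g (2 * Real.sqrt 3 / 3) := by
  have hs := g_summable
  set a := ∑' n, g n with ha
  have hsum : HasSum g a := hs.hasSum
  have hsq : a * a = 4/3 := by
    rw [ha, tsum_mul_tsum_eq_tsum_sum_range_of_summable_norm g_summable_norm g_summable_norm]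
    have hinner : ∀ n, (∑ k ∈ range (n+1), g k * g (n-k)) = (1/4:ℝ)^n := by
      intro n
      have : ∀ k ∈ range (n+1), g k * g (n-k) = (v k * v (n-k)) / 16^n := by
        intro k hk
        have hkn : k ≤ n := Nat.lt_succ_iff.mp (mem_range.mp hk)
        unfold g
        rw [div_mul_div_comm, ← pow_add, Nat.add_sub_cancel' hkn]
      rw [Finset.sum_congr rfl this, ← Finset.sum_div,
        show (∑ i ∈ range (n+1), v i * v (n-i)) = S n from rfl, S_eq]
      rw [div_eq_iff (by positivity), ← mul_pow]
      norm_num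
    rw [tsum_congr hinner, tsum_geometric_of_lt_one (by norm_num) (by norm_num)]
    norm_num
  have hapos : 0 < a := by
    have h0 : (0:ℝ) < g 0 := by simpa [g] using v_pos 0
    exact h0.trans_le (Summable.le_tsum hs 0 (fun i _ => le_of_lt (div_pos (v_pos i) (by positivity))))
  have hb : a = 2 * Real.sqrt 3 / 3 := by
    have h3 : Real.sqrt 3 ^ 2 = 3 := Real.sq_sqrt (by norm_num)
    have hbpos : 0 < 2 * Real.sqrt 3 / 3 := by positivity
    nlinarith [hsq, hapos, hbpos]
  rwa [hb] at hsum

/-! ### Part 3: complex series algebra -/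

def c (n : ℕ) : ℂ := (Nat.centralBinom n : ℂ) / 4^n

lemma c_rec (k : ℕ) : (2*(k:ℂ)+2) * c (k+1) = (2*k+1) * c k := by
  have h := congrArg (Nat.cast : ℕ → ℂ) (Nat.succ_mul_centralBinom_succ k)
  push_cast at h
  unfold c
  have h2 : (4:ℂ)^k ≠ 0 := by norm_num
  field_simp
  linear_combination (2 * (4:ℂ)^k) * h

lemma natc_ne (a : ℕ) (h : a ≠ 0) : ((a:ℂ)) ≠ 0 := Nat.cast_ne_zero.mpr h

lemma c_div (k : ℕ) : c (k+1) = ((2*(k:ℂ)+1) * c k) / (2*(k:ℂ)+2) := by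
  have h1 : (2*(k:ℂ)+2) ≠ 0 := by
    have := natc_ne (2*k+2) (by omega); push_cast at this; exact_mod_cast this
  rw [eq_div_iff h1]
  linear_combination c_rec k

lemma coeff_id (n : ℕ) :
    ((14*(n:ℂ)+5)/(2*n-5)) * c n
      = -(c n) - (8/3)*(if 1 ≤ n then c (n-1) else 0)
        - (32/3)*(if 2 ≤ n then c (n-2) else 0)
        + (64/3)*(if 3 ≤ n then c (n-3) else 0) := by
  have c0 : c 0 = 1 := by simp [c]
  have c1 : c 1 = 1/2 := by
    rw [(c_div 0 : c 1 = _), c0]; norm_num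
  have c2 : c 2 = 3/8 := by
    rw [(c_div 1 : c 2 = _), c1]; norm_num
  match n with
  | 0 => norm_num [c0]
  | 1 => norm_num [c0, c1]
  | 2 => norm_num [c0, c1, c2]
  | (m+3) =>
    have h1 : (2*(m:ℂ)+1) ≠ 0 := by
      have := natc_ne (2*m+1) (by omega); push_cast at this; exact_mod_cast this
    simp only [show m+3-1 = m+2 from rfl, show m+3-2 = m+1 from rfl, show m+3-3 = m from rfl,
      if_pos (by omega : 1 ≤ m+3), if_pos (by omega : 2 ≤ m+3), if_pos (by omega : 3 ≤ m+3)]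
    have hd : 2*(((m:ℂ))+3)-5 ≠ 0 := by
      have : 2*((m:ℂ)+3)-5 = 2*m+1 := by ring
      rw [this]; exact h1
    have E0 := c_rec m
    have E1 := c_rec (m+1)
    have E2 := c_rec (m+2)
    push_cast at E0 E1 E2 ⊢
    rw [div_mul_eq_mul_div, div_eq_iff hd]
    linear_combination (8:ℂ) * E2 + (32/3) * E1 + (64/3) * E0

lemma shift {w a : ℂ} (hA : HasSum (fun n => c n * w^n) a) (j : ℕ) :
    HasSum (fun n => (if j ≤ n then c (n-j) else 0) * w^n) (a * w^j) := by
  set f : ℕ → ℂ := fun n => (if j ≤ n then c (n-j) else 0) * w^n with hf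
  have h1 : HasSum (fun n => f (n + j)) (a * w^j) := by
    have := hA.mul_right (w^j)
    refine this.congr_fun fun n => ?_
    simp only [hf, if_pos (Nat.le_add_left j n), Nat.add_sub_cancel, pow_add]
    ring
  have h2 := (hasSum_nat_add_iff (f := f) j).mp h1
  have h3 : ∑ i ∈ range j, f i = 0 := by
    apply Finset.sum_eq_zero
    intro i hi
    simp [hf, Nat.not_le.mpr (mem_range.mp hi)]
  rwa [h3, add_zero] at h2

lemma main {w a : ℂ} (hA : HasSum (fun n => c n * w^n) a) :
    HasSum (fun n : ℕ => ((14*(n:ℂ)+5)/(2*(n:ℂ)-5)) * c n * w^n)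
      (a * (-1 - (8/3)*w - (32/3)*w^2 + (64/3)*w^3)) := by
  have h1 := (shift hA 1).mul_left (8/3)
  have h2 := (shift hA 2).mul_left (32/3)
  have h3 := (shift hA 3).mul_left (64/3)
  have hcomb := ((hA.neg.sub h1).sub h2).add h3
  have hval : -a - 8/3*(a*w^1) - 32/3*(a*w^2) + 64/3*(a*w^3)
      = a * (-1 - (8/3)*w - (32/3)*w^2 + (64/3)*w^3) := by ring
  rw [hval] at hcomb
  refine hcomb.congr_fun fun n => ?_
  have hid := coeff_id n
  calc ((14*(n:ℂ)+5)/(2*(n:ℂ)-5)) * c n * w^n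
      = (((14*(n:ℂ)+5)/(2*(n:ℂ)-5)) * c n) * w^n := by ring
    _ = (-(c n) - (8/3)*(if 1 ≤ n then c (n-1) else 0)
        - (32/3)*(if 2 ≤ n then c (n-2) else 0)
        + (64/3)*(if 3 ≤ n then c (n-3) else 0)) * w^n := by rw [hid]
    _ = _ := by ring

/-! ### Part 4: the three evaluation points -/

def sq3 : ℂ := (Real.sqrt 3 : ℝ)

lemma sq3_sq : sq3^2 = 3 := by
  unfold sq3
  rw [← Complex.ofReal_pow, Real.sq_sqrt (by norm_num : (3:ℝ) ≥ 0)]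
  norm_num

def w0 : ℂ := 1/4
def w1 : ℂ := (-1 + sq3 * Complex.I)/8
def w2 : ℂ := (-1 - sq3 * Complex.I)/8

lemma u1_sq : (-1 + sq3 * Complex.I)^2 = -2 - 2*(sq3 * Complex.I) := by
  linear_combination (Complex.I^2) * sq3_sq + 3 * Complex.I_sq
lemma u1_cube : (-1 + sq3 * Complex.I)^3 = 8 := by
  linear_combination (-1 + sq3 * Complex.I) * u1_sq
    + (-2*Complex.I^2) * sq3_sq + (-6) * Complex.I_sq
lemma u2_sq : (-1 - sq3 * Complex.I)^2 = -2 + 2*(sq3 * Complex.I) := by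
  linear_combination (Complex.I^2) * sq3_sq + 3 * Complex.I_sq
lemma u2_cube : (-1 - sq3 * Complex.I)^3 = 8 := by
  linear_combination (-1 - sq3 * Complex.I) * u2_sq
    + (-2*Complex.I^2) * sq3_sq + (-6) * Complex.I_sq

lemma F_w0 : (-1 - (8/3)*w0 - (32/3)*w0^2 + (64/3)*w0^3 : ℂ) = -2 := by
  unfold w0; norm_num

lemma F_w1 : (-1 - (8/3)*w1 - (32/3)*w1^2 + (64/3)*w1^3 : ℂ) = 0 := by
  unfold w1
  linear_combination (-1/6 : ℂ) * u1_sq + (1/24 : ℂ) * u1_cube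

lemma F_w2 : (-1 - (8/3)*w2 - (32/3)*w2^2 + (64/3)*w2^3 : ℂ) = 0 := by
  unfold w2
  linear_combination (-1/6 : ℂ) * u2_sq + (1/24 : ℂ) * u2_cube

lemma w1_cube : w1^3 = 1/64 := by
  unfold w1
  rw [div_pow, u1_cube]; norm_num

lemma w2_cube : w2^3 = 1/64 := by
  unfold w2
  rw [div_pow, u2_cube]; norm_num

lemma w0_cube : w0^3 = 1/64 := by unfold w0; norm_num

lemma key3 (n : ℕ) :
    w0^n + w1^n + w2^n = if 3 ∣ n then 3 * (1/4:ℂ)^n else 0 := by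
  have hn : n = 3 * (n / 3) + n % 3 := (Nat.div_add_mod n 3).symm
  set q := n / 3
  set r := n % 3 with hr
  have hcube : ∀ wx : ℂ, wx^3 = 1/64 → wx^n = (1/64:ℂ)^q * wx^r := by
    intro wx h
    rw [hn, pow_add, pow_mul, h]
  rw [hcube w0 w0_cube, hcube w1 w1_cube, hcube w2 w2_cube]
  have hr3 : r < 3 := Nat.mod_lt _ (by norm_num)
  have hdvd : 3 ∣ n ↔ r = 0 := by omega
  interval_cases r
  · rw [if_pos (hdvd.mpr rfl)]
    rw [hn]
    norm_num [pow_mul]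
    ring
  · rw [if_neg (fun h => by omega : ¬ 3 ∣ n)]
    unfold w0 w1 w2
    ring
  · rw [if_neg (fun h => by omega : ¬ 3 ∣ n)]
    unfold w0 w1 w2
    simp only [div_pow]
    rw [u1_sq, u2_sq]
    ring

lemma c_norm (n : ℕ) : ‖c n‖ = (Nat.centralBinom n : ℝ) / 4^n := by
  simp [c, norm_div]

lemma csummable {w : ℂ} (hw : ‖w‖ ≤ 1/4) : Summable (fun n => c n * w^n) := by
  apply Summable.of_norm
  refine Summable.of_nonneg_of_le (fun n => norm_nonneg _) (fun n => ?_)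
    (summable_geometric_of_lt_one (r := 1/4) (by norm_num) (by norm_num))
  calc ‖c n * w^n‖ = ‖c n‖ * ‖w‖^n := by rw [norm_mul, norm_pow]
    _ ≤ 1 * (1/4)^n := by
        apply mul_le_mul
        · rw [c_norm, div_le_one (by positivity)]
          exact_mod_cast cb_le n
        · exact pow_le_pow_left₀ (norm_nonneg w) hw n
        · positivity
        · norm_num
    _ = (1/4)^n := one_mul _

lemma norm_w1 : ‖w1‖ = 1/4 := by
  unfold w1
  rw [norm_div]
  have h1 : (-1 + sq3 * Complex.I) = ((-1 : ℝ) : ℂ) + (Real.sqrt 3 : ℝ) * Complex.I := by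
    unfold sq3; push_cast; ring
  rw [h1, Complex.norm_add_mul_I]
  have : ((-1:ℝ))^2 + (Real.sqrt 3)^2 = 4 := by
    rw [Real.sq_sqrt (by norm_num : (3:ℝ) ≥ 0)]; norm_num
  rw [this, show (4:ℝ) = 2^2 by norm_num, Real.sqrt_sq (by norm_num : (2:ℝ) ≥ 0)]
  simp
  norm_num

lemma norm_w2 : ‖w2‖ = 1/4 := by
  unfold w2
  rw [norm_div]
  have h1 : (-1 - sq3 * Complex.I) = ((-1 : ℝ) : ℂ) + (-Real.sqrt 3 : ℝ) * Complex.I := by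
    unfold sq3; push_cast; ring
  rw [h1, Complex.norm_add_mul_I]
  have : ((-1:ℝ))^2 + (-Real.sqrt 3)^2 = 4 := by
    have h2 : (-Real.sqrt 3:ℝ)^2 = 3 := by
      rw [neg_sq]; exact Real.sq_sqrt (by norm_num)
    rw [h2]; norm_num
  rw [this, show (4:ℝ) = 2^2 by norm_num, Real.sqrt_sq (by norm_num : (2:ℝ) ≥ 0)]
  simp
  norm_num

/-! ### Part 5: assembly -/

lemma hA0 : HasSum (fun n => c n * w0^n) ((2*Real.sqrt 3/3 : ℝ) : ℂ) := by
  have h := Complex.hasSum_ofReal.mpr hA_real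
  refine h.congr_fun fun n => ?_
  unfold c w0 g v
  push_cast
  rw [div_pow, one_pow, div_mul_div_comm, mul_one, ← mul_pow]
  norm_num

lemma hW1 : ∃ a, HasSum (fun n => c n * w1^n) a :=
  ⟨_, (csummable (le_of_eq norm_w1)).hasSum⟩
lemma hW2 : ∃ a, HasSum (fun n => c n * w2^n) a :=
  ⟨_, (csummable (le_of_eq norm_w2)).hasSum⟩

lemma hT : HasSum
    (fun n : ℕ => if 3 ∣ n then ((14*(n:ℂ)+5)/(2*(n:ℂ)-5)) * c n * (1/4)^n else 0)
    ((-(4 * Real.sqrt 3 / 9) : ℝ) : ℂ) := by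
  obtain ⟨a1, h1⟩ := hW1
  obtain ⟨a2, h2⟩ := hW2
  have m0 := main hA0
  have m1 := main h1
  have m2 := main h2
  rw [F_w0] at m0
  rw [F_w1, mul_zero] at m1
  rw [F_w2, mul_zero] at m2
  have hsum3 := ((m0.add m1).add m2).mul_left (1/3)
  have hval : (1/3 : ℂ) * ((((2*Real.sqrt 3/3 : ℝ) : ℂ) * (-2) + 0) + 0)
      = ((-(4 * Real.sqrt 3 / 9) : ℝ) : ℂ) := by
    push_cast
    ring
  rw [hval] at hsum3
  refine hsum3.congr_fun fun n => ?_
  have hk := key3 n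
  by_cases h : 3 ∣ n
  · rw [if_pos h]
    have hw : w0^n + w1^n + w2^n = 3 * (1/4:ℂ)^n := by rw [hk, if_pos h]
    calc ((14*(n:ℂ)+5)/(2*(n:ℂ)-5)) * c n * (1/4:ℂ)^n
        = 1/3 * (((14*(n:ℂ)+5)/(2*(n:ℂ)-5)) * c n * (3 * (1/4:ℂ)^n)) := by ring
      _ = 1/3 * (((14*(n:ℂ)+5)/(2*(n:ℂ)-5)) * c n * (w0^n + w1^n + w2^n)) := by rw [hw]
      _ = _ := by ring
  · rw [if_neg h]
    have hw : w0^n + w1^n + w2^n = 0 := by rw [hk, if_neg h]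
    have h3 : ((14*(n:ℂ)+5)/(2*(n:ℂ)-5)) * c n * (w0^n + w1^n + w2^n) = 0 := by
      rw [hw, mul_zero]
    calc (0:ℂ) = 1/3 * (((14*(n:ℂ)+5)/(2*(n:ℂ)-5)) * c n * (w0^n + w1^n + w2^n)) := by
          rw [h3, mul_zero]
      _ = _ := by ring

end Series2Aux

theorem series_stmt_2 :
    HasSum (fun k : ℕ =>
      (42 * (k : ℝ) + 5) * (Nat.choose (6 * k) (3 * k)) / ((6 * (k : ℝ) - 5) * 4096 ^ k))
      (-(4 * Real.sqrt 3 / 9)) := by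
  classical
  set T : ℕ → ℂ := fun n =>
    if 3 ∣ n then ((14*(n:ℂ)+5)/(2*(n:ℂ)-5)) * Series2Aux.c n * (1/4)^n else 0 with hTdef
  have hT := Series2Aux.hT
  have hinj : Function.Injective (fun k : ℕ => 3 * k) := fun a b h => by
    have h3 : 3 * a = 3 * b := h
    omega
  have hvan : ∀ x ∉ Set.range (fun k : ℕ => 3 * k), T x = 0 := by
    intro x hx
    rw [hTdef]
    simp only
    rw [if_neg]
    rintro ⟨k, rfl⟩
    exact hx ⟨k, rfl⟩
  have hTc := (Function.Injective.hasSum_iff hinj hvan).mpr hT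
  rw [← Complex.hasSum_ofReal (f := fun k : ℕ =>
      (42 * (k : ℝ) + 5) * (Nat.choose (6 * k) (3 * k)) / ((6 * (k : ℝ) - 5) * 4096 ^ k))]
  refine hTc.congr_fun fun k => ?_
  show (((42 * (k : ℝ) + 5) * (Nat.choose (6 * k) (3 * k)) /
      ((6 * (k : ℝ) - 5) * 4096 ^ k) : ℝ) : ℂ) = T (3 * k)
  rw [hTdef]
  simp only
  rw [if_pos ⟨k, rfl⟩]
  unfold Series2Aux.c
  have hcb : (Nat.centralBinom (3*k) : ℂ) = (Nat.choose (6*k) (3*k) : ℂ) := by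
    unfold Nat.centralBinom
    congr 2
    ring
  rw [hcb]
  have hne : (6*(k:ℂ)-5) ≠ 0 := by
    intro h
    have h5 : ((6*k:ℕ):ℂ) = ((5:ℕ):ℂ) := by push_cast; linear_combination h
    have := Nat.cast_injective h5
    omega
  have hner : (6*(k:ℝ)-5) ≠ 0 := by
    intro h
    have h5 : ((6*k:ℕ):ℝ) = ((5:ℕ):ℝ) := by push_cast; linear_combination h
    have := Nat.cast_injective h5
    omega
  push_cast
  have e1 : ((1:ℂ)/4)^(3*k) = 1/(64:ℂ)^k := by
    rw [div_pow, one_pow, pow_mul]; norm_num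
  have e2 : (4:ℂ)^(3*k) = 64^k := by rw [pow_mul]; norm_num
  have e3 : (14*(3*(k:ℂ))+5) = 42*k+5 := by ring
  have e4 : (2*(3*(k:ℂ))-5) = 6*k-5 := by ring
  have hp : (64:ℂ)^k * 64^k = 4096^k := by rw [← mul_pow]; norm_num
  rw [e1, e2, e3, e4, div_mul_div_comm, div_mul_div_comm, mul_one]
  congr 1
  rw [mul_assoc, hp]
end
end

section
/- For every real number x and every nonnegative integer n, ∑_{k=0}^n x^k·(9(x-64)k³ + 18(x-16)k² + (11x+208)k + 2x+40) / ((6k+1)(6k+5)·C(6k,3k)) = 8 + (n+1)(3n+1)(3n+2)·x^{n+1} / ((6n+1)(6n+5)·C(6n,3n)). -/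
lemma cb_key (n : ℕ) :
    ((3*n+1) * (3*n+2) * (3*n+3) : ℝ) * (Nat.choose (6*(n+1)) (3*(n+1))) =
      8 * (6*n+1) * (6*n+3) * (6*n+5) * (Nat.choose (6*n) (3*n)) := by
  have e0 : (6*n).choose (3*n) = Nat.centralBinom (3*n) := by
    unfold Nat.centralBinom; ring_nf
  have e1 : (6*(n+1)).choose (3*(n+1)) = Nat.centralBinom (3*n+3) := by
    unfold Nat.centralBinom; ring_nf
  rw [e0, e1]
  have h1 := Nat.succ_mul_centralBinom_succ (3*n)
  have h2 := Nat.succ_mul_centralBinom_succ (3*n+1)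
  have h3 := Nat.succ_mul_centralBinom_succ (3*n+2)
  have h1' : ((3*n+1 : ℕ) : ℝ) * Nat.centralBinom (3*n+1)
      = 2 * (2*(3*n)+1) * Nat.centralBinom (3*n) := by exact_mod_cast h1
  have h2' : ((3*n+2 : ℕ) : ℝ) * Nat.centralBinom (3*n+2)
      = 2 * (2*(3*n+1)+1) * Nat.centralBinom (3*n+1) := by exact_mod_cast h2
  have h3' : ((3*n+3 : ℕ) : ℝ) * Nat.centralBinom (3*n+3)
      = 2 * (2*(3*n+2)+1) * Nat.centralBinom (3*n+2) := by exact_mod_cast h3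
  push_cast at h1' h2' h3' ⊢
  nlinarith [h1', h2', h3', sq_nonneg ((n:ℝ)),
    mul_pos (by positivity : (0:ℝ) < (3*(n:ℝ)+1)) (by positivity : (0:ℝ) < (3*(n:ℝ)+2))]

theorem series_stmt_5 (x : ℝ) (n : ℕ) :
    ∑ k ∈ Finset.range (n + 1),
      x ^ k * (9 * (x - 64) * (k : ℝ) ^ 3 + 18 * (x - 16) * k ^ 2 + (11 * x + 208) * k
          + 2 * x + 40) /
        ((6 * (k : ℝ) + 1) * (6 * k + 5) * (Nat.choose (6 * k) (3 * k)))
    = 8 + ((n : ℝ) + 1) * (3 * n + 1) * (3 * n + 2) * x ^ (n + 1) /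
        ((6 * (n : ℝ) + 1) * (6 * n + 5) * (Nat.choose (6 * n) (3 * n))) := by
  induction n with
  | zero =>
    simp
    ring
  | succ n ih =>
    rw [Finset.sum_range_succ, ih]
    have hc0 : (0:ℝ) < (Nat.choose (6*n) (3*n) : ℝ) := by
      exact_mod_cast Nat.choose_pos (by omega)
    have hc1 : (0:ℝ) < (Nat.choose (6*(n+1)) (3*(n+1)) : ℝ) := by
      exact_mod_cast Nat.choose_pos (by omega)
    have key := cb_key n
    have hc1eq : (Nat.choose (6*(n+1)) (3*(n+1)) : ℝ) =
        8 * (6*n+1) * (6*n+3) * (6*n+5) * (Nat.choose (6*n) (3*n))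
          / ((3*n+1) * (3*n+2) * (3*n+3)) := by
      field_simp
      linarith [key]
    push_cast
    rw [hc1eq]
    have d1 : (6*(n:ℝ)+1) ≠ 0 := by positivity
    have d2 : (6*(n:ℝ)+5) ≠ 0 := by positivity
    field_simp
    ring
end

section
/- For every real number x and every nonnegative integer n, ∑_{k=0}^n x^k·(9(x-64)k³ + 18(x-48)k² + (11x-368)k + 2x-40) / ((2k+1)(6k+1)(6k+5)·C(6k,3k)) = -8 + (n+1)(3n+1)(3n+2)·x^{n+1} / ((2n+1)(6n+1)(6n+5)·C(6n,3n)). -/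
lemma choose6_succ (n : ℕ) :
    (Nat.choose (6*n+6) (3*n+3) : ℝ) * ((3*n+1)*(3*n+2)*(3*n+3))^2
      = (Nat.choose (6*n) (3*n) : ℝ) *
        ((6*n+1)*(6*n+2)*(6*n+3)*(6*n+4)*(6*n+5)*(6*n+6)) := by
  have h1 : (3*n+3) ≤ (6*n+6) := by omega
  have h2 : (3*n) ≤ (6*n) := by omega
  rw [Nat.cast_choose ℝ h1, Nat.cast_choose ℝ h2]
  have e1 : 6*n+6 - (3*n+3) = 3*n+3 := by omega
  have e2 : 6*n - 3*n = 3*n := by omega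
  rw [e1, e2]
  have f1 : Nat.factorial (6*n+6) = (6*n+6)*((6*n+5)*((6*n+4)*((6*n+3)*((6*n+2)*((6*n+1)*Nat.factorial (6*n)))))) := by
    rw [show 6*n+6 = (6*n+5)+1 by omega, Nat.factorial_succ]
    rw [show 6*n+5 = (6*n+4)+1 by omega, Nat.factorial_succ]
    rw [show 6*n+4 = (6*n+3)+1 by omega, Nat.factorial_succ]
    rw [show 6*n+3 = (6*n+2)+1 by omega, Nat.factorial_succ]
    rw [show 6*n+2 = (6*n+1)+1 by omega, Nat.factorial_succ]
    rw [show 6*n+1 = (6*n)+1 by omega, Nat.factorial_succ]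
  have f2 : Nat.factorial (3*n+3) = (3*n+3)*((3*n+2)*((3*n+1)*Nat.factorial (3*n))) := by
    rw [show 3*n+3 = (3*n+2)+1 by omega, Nat.factorial_succ]
    rw [show 3*n+2 = (3*n+1)+1 by omega, Nat.factorial_succ]
    rw [show 3*n+1 = (3*n)+1 by omega, Nat.factorial_succ]
  rw [f1, f2]
  push_cast
  have h3 : ((Nat.factorial (3*n) : ℝ)) ≠ 0 := Nat.cast_ne_zero.2 (Nat.factorial_ne_zero _)
  have h4 : ((Nat.factorial (6*n) : ℝ)) ≠ 0 := Nat.cast_ne_zero.2 (Nat.factorial_ne_zero _)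
  field_simp

theorem series_stmt_6 (x : ℝ) (n : ℕ) :
    ∑ k ∈ Finset.range (n + 1),
      x ^ k * (9 * (x - 64) * (k : ℝ) ^ 3 + 18 * (x - 48) * k ^ 2 + (11 * x - 368) * k
          + 2 * x - 40) /
        ((2 * (k : ℝ) + 1) * (6 * k + 1) * (6 * k + 5) * (Nat.choose (6 * k) (3 * k)))
    = -8 + ((n : ℝ) + 1) * (3 * n + 1) * (3 * n + 2) * x ^ (n + 1) /
        ((2 * (n : ℝ) + 1) * (6 * n + 1) * (6 * n + 5) * (Nat.choose (6 * n) (3 * n))) := by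
  induction n with
  | zero => norm_num; ring
  | succ n ih =>
    rw [Finset.sum_range_succ, ih]
    have hc : 0 < Nat.choose (6*n) (3*n) := Nat.choose_pos (by omega)
    have hc' : ((Nat.choose (6*n) (3*n) : ℝ)) ≠ 0 := by positivity
    have hcs : 0 < Nat.choose (6*(n+1)) (3*(n+1)) := Nat.choose_pos (by omega)
    have key : (Nat.choose (6*(n+1)) (3*(n+1)) : ℝ)
        = (Nat.choose (6*n) (3*n) : ℝ) *
          ((6*n+1)*(6*n+2)*(6*n+3)*(6*n+4)*(6*n+5)*(6*n+6)) / ((3*n+1)*(3*n+2)*(3*n+3))^2 := by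
      have := choose6_succ n
      have h9 : ((3*(n:ℝ)+1)*(3*n+2)*(3*n+3))^2 ≠ 0 := by positivity
      rw [show 6*(n+1) = 6*n+6 by ring, show 3*(n+1) = 3*n+3 by ring]
      field_simp at this ⊢
      linarith [this]
    rw [key]
    have h1 : (2*(n:ℝ)+1) ≠ 0 := by positivity
    have h2 : (6*(n:ℝ)+1) ≠ 0 := by positivity
    have h3 : (6*(n:ℝ)+5) ≠ 0 := by positivity
    push_cast
    have h4 : (2*((n:ℝ)+1)+1) ≠ 0 := by positivity
    have h5 : (6*((n:ℝ)+1)+1) ≠ 0 := by positivity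
    have h6 : (6*((n:ℝ)+1)+5) ≠ 0 := by positivity
    have h7 : ((3*(n:ℝ)+1)*(3*n+2)*(3*n+3))^2 ≠ 0 := by positivity
    field_simp
    ring
end

section
/- For every nonnegative integer n, ∑_{k=0}^n 8^k·(63k³+18k²-37k-7) / ((6k+1)(6k+5)·C(6k,3k)) = -1 - 8^n·(n+1)(3n+1)(3n+2) / ((6n+1)(6n+5)·C(6n,3n)). -/
lemma choose_pos_real (m : ℕ) : (0:ℝ) < (Nat.choose (6*m) (3*m) : ℝ) := by
  exact_mod_cast Nat.choose_pos (by omega)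

lemma choose_step (m : ℕ) :
    ((Nat.choose (6*(m+1)) (3*(m+1)) : ℝ)) * ((3*(m:ℝ)+1)*(3*m+2)*(3*m+3))^2
      = (Nat.choose (6*m) (3*m) : ℝ) *
        ((6*m+1)*(6*m+2)*(6*m+3)*(6*m+4)*(6*m+5)*(6*m+6)) := by
  have h1 : (Nat.choose (6*m) (3*m) : ℝ) = (6*m).factorial / ((3*m).factorial * ((6*m)-(3*m)).factorial) :=
    Nat.cast_choose ℝ (by omega)
  have h2 : (Nat.choose (6*(m+1)) (3*(m+1)) : ℝ) = (6*(m+1)).factorial / ((3*(m+1)).factorial * ((6*(m+1))-(3*(m+1))).factorial) :=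
    Nat.cast_choose ℝ (by omega)
  have e1 : (6*m) - (3*m) = 3*m := by omega
  have e2 : (6*(m+1)) - (3*(m+1)) = 3*m+3 := by omega
  have e3 : 6*(m+1) = (6*m)+6 := by omega
  have e4 : 3*(m+1) = (3*m)+3 := by omega
  rw [e1] at h1
  rw [e2, e3, e4] at h2
  have f6 : ((6*m+6).factorial : ℝ) =
      ((6*m:ℝ)+6)*((6*m:ℝ)+5)*((6*m:ℝ)+4)*((6*m:ℝ)+3)*((6*m:ℝ)+2)*((6*m:ℝ)+1)*((6*m).factorial : ℝ) := by
    have : 6*m+6 = (6*m)+6 := rfl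
    push_cast [show 6*m+6 = ((((((6*m)+1)+1)+1)+1)+1)+1 from rfl, Nat.factorial_succ]
    ring
  have f3 : ((3*m+3).factorial : ℝ) =
      ((3*m:ℝ)+3)*((3*m:ℝ)+2)*((3*m:ℝ)+1)*((3*m).factorial : ℝ) := by
    push_cast [show 3*m+3 = (((3*m)+1)+1)+1 from rfl, Nat.factorial_succ]
    ring
  have hf3 : ((3*m).factorial : ℝ) ≠ 0 := by positivity
  rw [e3, e4, h1, h2, f6, f3]
  field_simp

theorem series_stmt_7 (n : ℕ) :
    ∑ k ∈ Finset.range (n + 1),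
      (8 : ℝ) ^ k * (63 * (k : ℝ) ^ 3 + 18 * k ^ 2 - 37 * k - 7) /
        ((6 * (k : ℝ) + 1) * (6 * k + 5) * (Nat.choose (6 * k) (3 * k)))
    = -1 - (8 : ℝ) ^ n * ((n : ℝ) + 1) * (3 * n + 1) * (3 * n + 2) /
        ((6 * (n : ℝ) + 1) * (6 * n + 5) * (Nat.choose (6 * n) (3 * n))) := by
  induction n with
  | zero => norm_num
  | succ m ih =>
    rw [Finset.sum_range_succ, ih]
    have hB := choose_pos_real m
    have hB1 := choose_pos_real (m+1)
    have key := choose_step m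
    have h1 : (6*(m:ℝ)+1) ≠ 0 := by positivity
    have h5 : (6*(m:ℝ)+5) ≠ 0 := by positivity
    have h7 : (6*((m:ℝ)+1)+1) ≠ 0 := by positivity
    have h11 : (6*((m:ℝ)+1)+5) ≠ 0 := by positivity
    have hQ : ((3*(m:ℝ)+1)*(3*m+2)*(3*m+3)) ≠ 0 := by positivity
    have hBexpr : (Nat.choose (6*(m+1)) (3*(m+1)) : ℝ)
        = (Nat.choose (6*m) (3*m) : ℝ) *
          ((6*m+1)*(6*m+2)*(6*m+3)*(6*m+4)*(6*m+5)*(6*m+6)) /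
          ((3*(m:ℝ)+1)*(3*m+2)*(3*m+3))^2 := by
      rw [eq_div_iff (pow_ne_zero 2 hQ)]
      linarith [key]
    push_cast [hBexpr]
    field_simp
    ring
end

section
/- For every nonnegative integer n, ∑_{k=0}^n 8^k·(63k³+90k²+35k+3) / ((2k+1)(6k+1)(6k+5)·C(6k,3k)) = 1 - 8^n·(n+1)(3n+1)(3n+2) / ((2n+1)(6n+1)(6n+5)·C(6n,3n)). -/
lemma key_nat (n : ℕ) :
    Nat.choose (6*n+6) (3*n+3) * ((3*n+1)*(3*n+2)*(n+1)) =
    Nat.choose (6*n) (3*n) * (8*(6*n+1)*(2*n+1)*(6*n+5)) := by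
  have hpos : 0 < Nat.factorial (3*n+3) * Nat.factorial (3*n+3) :=
    Nat.mul_pos (Nat.factorial_pos _) (Nat.factorial_pos _)
  apply Nat.eq_of_mul_eq_mul_right hpos
  have h1 : 6*n+6 - (3*n+3) = 3*n+3 := by omega
  have h2 : 6*n - 3*n = 3*n := by omega
  have e1 := Nat.choose_mul_factorial_mul_factorial (show 3*n+3 ≤ 6*n+6 by omega)
  rw [h1] at e1
  have e2 := Nat.choose_mul_factorial_mul_factorial (show 3*n ≤ 6*n by omega)
  rw [h2] at e2
  have f1 : Nat.factorial (3*n+3) = Nat.factorial (3*n) * ((3*n+1)*(3*n+2)*(3*n+3)) := by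
    show Nat.factorial (3*n+1+1+1) = _
    rw [Nat.factorial_succ, Nat.factorial_succ, Nat.factorial_succ]
    ring
  have f2 : Nat.factorial (6*n+6) = Nat.factorial (6*n) *
      ((6*n+1)*(6*n+2)*(6*n+3)*(6*n+4)*(6*n+5)*(6*n+6)) := by
    show Nat.factorial (6*n+1+1+1+1+1+1) = _
    simp only [Nat.factorial_succ]
    ring
  calc Nat.choose (6*n+6) (3*n+3) * ((3*n+1)*(3*n+2)*(n+1)) *
        (Nat.factorial (3*n+3) * Nat.factorial (3*n+3))
      = (Nat.choose (6*n+6) (3*n+3) * Nat.factorial (3*n+3) * Nat.factorial (3*n+3)) *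
        ((3*n+1)*(3*n+2)*(n+1)) := by ring
    _ = Nat.factorial (6*n+6) * ((3*n+1)*(3*n+2)*(n+1)) := by rw [e1]
    _ = (Nat.choose (6*n) (3*n) * Nat.factorial (3*n) * Nat.factorial (3*n)) *
        ((6*n+1)*(6*n+2)*(6*n+3)*(6*n+4)*(6*n+5)*(6*n+6)) * ((3*n+1)*(3*n+2)*(n+1)) := by
        rw [e2, f2]
    _ = Nat.choose (6*n) (3*n) * (8*(6*n+1)*(2*n+1)*(6*n+5)) *
        (Nat.factorial (3*n+3) * Nat.factorial (3*n+3)) := by rw [f1]; ring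

theorem series_stmt_8 (n : ℕ) :
    ∑ k ∈ Finset.range (n + 1),
      (8 : ℝ) ^ k * (63 * (k : ℝ) ^ 3 + 90 * k ^ 2 + 35 * k + 3) /
        ((2 * (k : ℝ) + 1) * (6 * k + 1) * (6 * k + 5) * (Nat.choose (6 * k) (3 * k)))
    = 1 - (8 : ℝ) ^ n * ((n : ℝ) + 1) * (3 * n + 1) * (3 * n + 2) /
        ((2 * (n : ℝ) + 1) * (6 * n + 1) * (6 * n + 5) * (Nat.choose (6 * n) (3 * n))) := by
  induction n with
  | zero => norm_num
  | succ n ih =>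
    rw [Finset.sum_range_succ, ih]
    have hc1 : (0:ℝ) < (Nat.choose (6*n) (3*n) : ℝ) := by
      exact_mod_cast Nat.choose_pos (by omega)
    have hk : (Nat.choose (6*(n+1)) (3*(n+1)) : ℝ) * ((3*(n:ℝ)+1)*(3*n+2)*(n+1)) =
        (Nat.choose (6*n) (3*n) : ℝ) * (8*(6*(n:ℝ)+1)*(2*n+1)*(6*n+5)) := by
      have h := key_nat n
      have h6 : 6*(n+1) = 6*n+6 := by ring
      have h3 : 3*(n+1) = 3*n+3 := by ring
      rw [h6, h3]
      exact_mod_cast h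
    have hp : ((3*(n:ℝ)+1)*(3*n+2)*(n+1)) ≠ 0 := by positivity
    have hB : (Nat.choose (6*(n+1)) (3*(n+1)) : ℝ) =
        (Nat.choose (6*n) (3*n) : ℝ) * (8*(6*(n:ℝ)+1)*(2*n+1)*(6*n+5)) /
          ((3*(n:ℝ)+1)*(3*n+2)*(n+1)) := by
      rw [eq_div_iff hp]; exact hk
    push_cast [hB]
    have d1 : (2*(n:ℝ)+1) ≠ 0 := by positivity
    have d2 : (6*(n:ℝ)+1) ≠ 0 := by positivity
    have d3 : (6*(n:ℝ)+5) ≠ 0 := by positivity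
    have d4 : (2*((n:ℝ)+1)+1) ≠ 0 := by positivity
    have d5 : (6*((n:ℝ)+1)+1) ≠ 0 := by positivity
    have d6 : (6*((n:ℝ)+1)+5) ≠ 0 := by positivity
    have hA : (Nat.choose (6*n) (3*n) : ℝ) ≠ 0 := ne_of_gt hc1
    field_simp
    ring
end

section
/- The infinite series ∑_{k=0}^∞ 8^k·(63k³+18k²-37k-7) / ((6k+1)(6k+5)·C(6k,3k)) converges and equals -1. -/
noncomputable def gg9 (k : ℕ) : ℝ :=
  8 ^ k * (9 * (k:ℝ) ^ 3 + 18 * k ^ 2 + 11 * k + 2) /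
    ((6 * (k:ℝ) + 1) * (6 * k + 5) * (Nat.choose (6 * k) (3 * k)))

lemma key_real9 (k : ℕ) :
    (3*(k:ℝ)+1) * (3*k+2) * (3*k+3) * (Nat.choose (6*(k+1)) (3*(k+1)) : ℝ) =
      8 * ((6*(k:ℝ)+1) * (6*k+3) * (6*k+5)) * (Nat.choose (6*k) (3*k) : ℝ) := by
  have h0 : ∀ m : ℕ, Nat.choose (6*m) (3*m) = Nat.centralBinom (3*m) := by
    intro m; unfold Nat.centralBinom; congr 1; ring
  have h1 : ((3*k+1 : ℕ) * Nat.centralBinom (3*k+1) : ℝ)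
      = ((2 * (2*(3*k)+1) * Nat.centralBinom (3*k) : ℕ) : ℝ) := by
    exact_mod_cast Nat.succ_mul_centralBinom_succ (3*k)
  have h2 : ((3*k+2 : ℕ) * Nat.centralBinom (3*k+2) : ℝ)
      = ((2 * (2*(3*k+1)+1) * Nat.centralBinom (3*k+1) : ℕ) : ℝ) := by
    exact_mod_cast Nat.succ_mul_centralBinom_succ (3*k+1)
  have h3 : ((3*k+3 : ℕ) * Nat.centralBinom (3*k+3) : ℝ)
      = ((2 * (2*(3*k+2)+1) * Nat.centralBinom (3*k+2) : ℕ) : ℝ) := by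
    exact_mod_cast Nat.succ_mul_centralBinom_succ (3*k+2)
  have e : 3*(k+1) = (3*k+2)+1 := by ring
  rw [h0, h0, e]
  push_cast at h1 h2 h3 ⊢
  linear_combination ((3*(k:ℝ)+1)*(3*k+2)) * h3 + (2*(6*(k:ℝ)+5)*(3*k+1)) * h2
    + (4*(6*(k:ℝ)+5)*(6*k+3)) * h1

lemma choose_pos9 (k : ℕ) : (0:ℝ) < (Nat.choose (6*k) (3*k) : ℝ) := by
  exact_mod_cast Nat.choose_pos (by omega)

lemma step9 (k : ℕ) :
    (8 : ℝ) ^ (k+1) * (63 * ((k:ℝ)+1) ^ 3 + 18 * ((k:ℝ)+1) ^ 2 - 37 * ((k:ℝ)+1) - 7) /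
        ((6 * ((k:ℝ)+1) + 1) * (6 * ((k:ℝ)+1) + 5) * (Nat.choose (6 * (k+1)) (3 * (k+1))))
      = gg9 k - gg9 (k+1) := by
  have hc := choose_pos9 k
  have hc' := choose_pos9 (k+1)
  have hcc : (Nat.choose (6*(k+1)) (3*(k+1)) : ℝ)
      = 8 * ((6*(k:ℝ)+1) * (6*k+3) * (6*k+5)) * (Nat.choose (6*k) (3*k) : ℝ)
        / ((3*(k:ℝ)+1) * (3*k+2) * (3*k+3)) := by
    rw [eq_div_iff (by positivity)]
    linear_combination key_real9 k
  unfold gg9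
  push_cast
  rw [hcc]
  have h1 : (6*(k:ℝ)+1) ≠ 0 := by positivity
  have h5 : (6*(k:ℝ)+5) ≠ 0 := by positivity
  have h7 : (6*(k:ℝ)+7) ≠ 0 := by positivity
  have h11 : (6*(k:ℝ)+11) ≠ 0 := by positivity
  field_simp
  ring

lemma gg9_tendsto : Filter.Tendsto gg9 Filter.atTop (nhds 0) := by
  have hbound : ∀ k : ℕ, 1 ≤ k → gg9 k ≤ 7 * (k:ℝ)^2 / 8^k := by
    intro k hk
    have hc := choose_pos9 k
    have hk1 : (1:ℝ) ≤ (k:ℝ) := by exact_mod_cast hk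
    have hcb : (64:ℝ)^k ≤ 6*(k:ℝ) * (Nat.choose (6*k) (3*k) : ℝ) := by
      have h0 : Nat.choose (6*k) (3*k) = Nat.centralBinom (3*k) := by
        unfold Nat.centralBinom; congr 1; ring
      have := Nat.four_pow_le_two_mul_self_mul_centralBinom (3*k) (by omega)
      have h2 : ((4:ℕ)^(3*k) : ℝ) ≤ ((2*(3*k) * Nat.centralBinom (3*k) : ℕ) : ℝ) := by
        exact_mod_cast this
      push_cast at h2
      calc (64:ℝ)^k = 4^(3*k) := by rw [pow_mul]; norm_num
        _ ≤ 2*(3*(k:ℝ)) * (Nat.centralBinom (3*k) : ℝ) := h2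
        _ = 6*(k:ℝ) * (Nat.choose (6*k) (3*k) : ℝ) := by rw [h0]; ring
    unfold gg9
    rw [div_le_div_iff₀ (by positivity) (by positivity)]
    have h64 : (8:ℝ)^k * 8^k = 64^k := by rw [← mul_pow]; norm_num
    have hp : (0:ℝ) ≤ 9 * (k:ℝ)^3 + 18*k^2 + 11*k + 2 := by positivity
    calc (8:ℝ)^k * (9 * (k:ℝ)^3 + 18*k^2 + 11*k + 2) * 8^k
        = 64^k * (9 * (k:ℝ)^3 + 18*k^2 + 11*k + 2) := by rw [← h64]; ring
      _ ≤ (6*(k:ℝ) * (Nat.choose (6*k) (3*k) : ℝ)) * (9 * (k:ℝ)^3 + 18*k^2 + 11*k + 2) :=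
          mul_le_mul_of_nonneg_right hcb hp
      _ ≤ 7 * (k:ℝ)^2 * ((6 * (k:ℝ) + 1) * (6 * k + 5) * (Nat.choose (6*k) (3*k))) := by
          nlinarith [hc, hk1, mul_le_mul_of_nonneg_right
            (show 6*(k:ℝ) * (9 * (k:ℝ)^3 + 18*k^2 + 11*k + 2)
              ≤ 7 * (k:ℝ)^2 * ((6 * (k:ℝ) + 1) * (6 * k + 5)) by nlinarith [hk1]) hc.le]
  have h0 : Filter.Tendsto (fun k : ℕ => 7 * (k:ℝ)^2 / 8^k) Filter.atTop (nhds 0) := by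
    have := (tendsto_pow_const_div_const_pow_of_one_lt 2
      (show (1:ℝ) < 8 by norm_num)).const_mul (7:ℝ)
    simpa [mul_div_assoc] using this
  apply squeeze_zero' ?_ ?_ h0
  · filter_upwards with k
    unfold gg9
    have hc := choose_pos9 k
    positivity
  · filter_upwards [Filter.eventually_atTop.2 ⟨1, fun k hk => hbound k hk⟩] with k h using h

theorem series_stmt_9 :
    HasSum (fun k : ℕ =>
      (8 : ℝ) ^ k * (63 * (k : ℝ) ^ 3 + 18 * k ^ 2 - 37 * k - 7) /
        ((6 * (k : ℝ) + 1) * (6 * k + 5) * (Nat.choose (6 * k) (3 * k))))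
      (-1) := by
  set t : ℕ → ℝ := fun k =>
      (8 : ℝ) ^ k * (63 * (k : ℝ) ^ 3 + 18 * k ^ 2 - 37 * k - 7) /
        ((6 * (k : ℝ) + 1) * (6 * k + 5) * (Nat.choose (6 * k) (3 * k))) with ht
  have hstep : ∀ k : ℕ, t (k+1) = gg9 k - gg9 (k+1) := by
    intro k
    rw [ht]
    have := step9 k
    push_cast
    convert this using 3 <;> push_cast <;> ring
  have hnonneg : ∀ k : ℕ, 0 ≤ t (k+1) := by
    intro k
    rw [ht]
    have hc := choose_pos9 (k+1)
    apply div_nonneg _ (by positivity)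
    have e : 63 * ((k:ℝ)+1)^3 + 18*((k:ℝ)+1)^2 - 37*((k:ℝ)+1) - 7
        = 63*(k:ℝ)^3 + 207*k^2 + 188*k + 37 := by ring
    push_cast
    rw [e]
    positivity
  have htends : Filter.Tendsto (fun n => ∑ i ∈ Finset.range n, t (i+1))
      Filter.atTop (nhds (gg9 0)) := by
    have he : ∀ n, ∑ i ∈ Finset.range n, t (i+1) = gg9 0 - gg9 n := by
      intro n
      rw [show (∑ i ∈ Finset.range n, t (i+1)) = ∑ i ∈ Finset.range n, (gg9 i - gg9 (i+1))
        from Finset.sum_congr rfl fun i _ => hstep i]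
      exact Finset.sum_range_sub' gg9 n
    simp only [he]
    simpa using Filter.Tendsto.const_sub (gg9 0) gg9_tendsto
  have hshift : HasSum (fun n : ℕ => t (n+1)) (gg9 0) :=
    (hasSum_iff_tendsto_nat_of_nonneg hnonneg _).mpr htends
  have := (hasSum_nat_add_iff (f := t) 1).mp hshift
  have hv : gg9 0 + ∑ i ∈ Finset.range 1, t i = -1 := by
    simp [gg9, ht]
    norm_num
  rwa [hv] at this
end

section
/- For every nonnegative integer n, ∑_{k=0}^n (4536k³-4644k²+1074k+25)·C(6k,3k) / ((6k-5)·4096^k) = -(2n+1)(6n+5)·C(6n,3n)/4096^n. -/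
lemma key_real (n : ℕ) :
    ((3*(n:ℝ)+1)*(3*n+2)*(3*n+3)) * Nat.choose (6*(n+1)) (3*(n+1))
      = 8*(6*(n:ℝ)+1)*(6*n+3)*(6*n+5) * Nat.choose (6*n) (3*n) := by
  have h0 := Nat.succ_mul_centralBinom_succ (3*n)
  have h1 := Nat.succ_mul_centralBinom_succ (3*n+1)
  have h2 := Nat.succ_mul_centralBinom_succ (3*n+2)
  unfold Nat.centralBinom at h0 h1 h2
  have e0 : 2*(3*n) = 6*n := by ring
  have e1 : 2*(3*n+1) = 6*n+2 := by ring
  have e2 : 2*(3*n+2) = 6*n+4 := by ring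
  have e3 : 2*(3*n+2+1) = 6*(n+1) := by ring
  have e3' : 3*n+2+1 = 3*(n+1) := by ring
  rw [e0, e1] at h0
  rw [e1, e2] at h1
  rw [e2, e3, e3'] at h2
  have H0 := congrArg (Nat.cast (R:=ℝ)) h0
  have H1 := congrArg (Nat.cast (R:=ℝ)) h1
  have H2 := congrArg (Nat.cast (R:=ℝ)) h2
  push_cast at H0 H1 H2
  linear_combination ((3*(n:ℝ)+1)*(3*n+2))*H2 + (2*(6*(n:ℝ)+5)*(3*n+1))*H1 + (4*(6*(n:ℝ)+5)*(6*n+3))*H0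

theorem series_stmt_13 (n : ℕ) :
    ∑ k ∈ Finset.range (n + 1),
      (4536 * (k : ℝ) ^ 3 - 4644 * k ^ 2 + 1074 * k + 25) * (Nat.choose (6 * k) (3 * k)) /
        ((6 * (k : ℝ) - 5) * 4096 ^ k)
    = -((2 * (n : ℝ) + 1) * (6 * n + 5) * (Nat.choose (6 * n) (3 * n)) / 4096 ^ n) := by
  induction n with
  | zero => norm_num
  | succ n ih =>
    rw [Finset.sum_range_succ, ih]
    have hk := key_real n
    have h1 : (6*((n:ℝ)+1) - 5) ≠ 0 := by
      have : (6*((n:ℝ)+1) - 5) = 6*n+1 := by ring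
      rw [this]; positivity
    have h2 : (4096:ℝ) ^ (n+1) ≠ 0 := by positivity
    have h3 : (4096:ℝ) ^ n ≠ 0 := by positivity
    have h4 : ((3*(n:ℝ)+1)*(3*n+2)*(3*n+3)) ≠ 0 := by positivity
    have hc : (Nat.choose (6*(n+1)) (3*(n+1)) : ℝ)
        = 8*(6*(n:ℝ)+1)*(6*n+3)*(6*n+5) * Nat.choose (6*n) (3*n)
          / ((3*(n:ℝ)+1)*(3*n+2)*(3*n+3)) := by
      field_simp
      linarith [hk]
    push_cast
    rw [hc]
    field_simp
    ring
end

section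
/- The infinite series ∑_{k=0}^∞ (4536k³-4500k²+978k+5)·C(6k,3k) / ((2k-1)(6k-1)(6k-5)·4096^k) converges and equals 0. -/
open Finset Nat

/-- Bound on the central-type binomial coefficient. -/
lemma choose_6k_le (k : ℕ) : Nat.choose (6 * k) (3 * k) ≤ 64 ^ k := by
  calc Nat.choose (6 * k) (3 * k) ≤ 2 ^ (6 * k) := by
        rw [← Nat.sum_range_choose (6 * k)]
        exact Finset.single_le_sum (f := fun m => Nat.choose (6 * k) m)
          (fun i _ => Nat.zero_le _) (by simp [Nat.lt_succ_iff]; omega)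
    _ = 64 ^ k := by
        rw [pow_mul]
        norm_num

/-- Key binomial recurrence. -/
lemma choose_rec (k : ℕ) :
    ((3 * k + 1 : ℕ) : ℝ) * (3 * k + 2) * (3 * k + 3) * (Nat.choose (6 * k + 6) (3 * k + 3)) =
      24 * (6 * k + 1) * (2 * k + 1) * (6 * k + 5) * (Nat.choose (6 * k) (3 * k)) := by
  have h1 := Nat.choose_mul_factorial_mul_factorial (show 3 * k ≤ 6 * k by omega)
  have h2 := Nat.choose_mul_factorial_mul_factorial (show 3 * k + 3 ≤ 6 * k + 6 by omega)
  rw [show 6 * k - 3 * k = 3 * k by omega] at h1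
  rw [show 6 * k + 6 - (3 * k + 3) = 3 * k + 3 by omega] at h2
  have e3 : (3 * k + 3)! = (3 * k + 3) * ((3 * k + 2) * ((3 * k + 1) * (3 * k)!)) := by
    rw [show 3 * k + 3 = (3 * k + 2) + 1 by ring, Nat.factorial_succ,
      show 3 * k + 2 = (3 * k + 1) + 1 by ring, Nat.factorial_succ,
      show 3 * k + 1 = (3 * k) + 1 by ring, Nat.factorial_succ]
  have e6 : (6 * k + 6)! = (6 * k + 6) * ((6 * k + 5) * ((6 * k + 4) * ((6 * k + 3) *
      ((6 * k + 2) * ((6 * k + 1) * (6 * k)!))))) := by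
    rw [show 6 * k + 6 = (6 * k + 5) + 1 by ring, Nat.factorial_succ,
      show 6 * k + 5 = (6 * k + 4) + 1 by ring, Nat.factorial_succ,
      show 6 * k + 4 = (6 * k + 3) + 1 by ring, Nat.factorial_succ,
      show 6 * k + 3 = (6 * k + 2) + 1 by ring, Nat.factorial_succ,
      show 6 * k + 2 = (6 * k + 1) + 1 by ring, Nat.factorial_succ,
      show 6 * k + 1 = (6 * k) + 1 by ring, Nat.factorial_succ]
  -- cast everything to ℝ
  have h1' : (Nat.choose (6 * k) (3 * k) : ℝ) * (3 * k)! * (3 * k)! = (6 * k)! := by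
    exact_mod_cast congrArg (Nat.cast : ℕ → ℝ) h1
  have h2' : (Nat.choose (6 * k + 6) (3 * k + 3) : ℝ) * (3 * k + 3)! * (3 * k + 3)! =
      (6 * k + 6)! := by exact_mod_cast congrArg (Nat.cast : ℕ → ℝ) h2
  have e3' : ((3 * k + 3)! : ℝ) = (3 * k + 3) * ((3 * k + 2) * ((3 * k + 1) * (3 * k)!)) := by
    exact_mod_cast congrArg (Nat.cast : ℕ → ℝ) e3
  have e6' : ((6 * k + 6)! : ℝ) = (6 * k + 6) * ((6 * k + 5) * ((6 * k + 4) * ((6 * k + 3) *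
      ((6 * k + 2) * ((6 * k + 1) * (6 * k)!))))) := by
    exact_mod_cast congrArg (Nat.cast : ℕ → ℝ) e6
  have hfac : ((3 * k)! : ℝ) ≠ 0 := by positivity
  have hc : ((3 * k + 1 : ℕ) : ℝ) * (3 * k + 2) * (3 * k + 3) ≠ 0 := by positivity
  have key : (((3 * k + 1 : ℕ) : ℝ) * (3 * k + 2) * (3 * k + 3) *
        (Nat.choose (6 * k + 6) (3 * k + 3))) *
        ((((3 * k + 1 : ℕ) : ℝ) * (3 * k + 2) * (3 * k + 3)) * ((3 * k)! * (3 * k)!)) =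
      (24 * ((6 * k : ℕ) + 1) * (2 * (k : ℝ) + 1) * (6 * k + 5) *
        (Nat.choose (6 * k) (3 * k))) *
        ((((3 * k + 1 : ℕ) : ℝ) * (3 * k + 2) * (3 * k + 3)) * ((3 * k)! * (3 * k)!)) := by
    have l1 : (((3 * k + 1 : ℕ) : ℝ) * (3 * k + 2) * (3 * k + 3) *
        (Nat.choose (6 * k + 6) (3 * k + 3))) *
        ((((3 * k + 1 : ℕ) : ℝ) * (3 * k + 2) * (3 * k + 3)) * ((3 * k)! * (3 * k)!)) =
        (Nat.choose (6 * k + 6) (3 * k + 3) : ℝ) * (3 * k + 3)! * (3 * k + 3)! := by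
      rw [e3']; push_cast; ring
    rw [l1, h2', e6', ← h1']
    push_cast
    ring
  have := mul_right_cancel₀ (by positivity :
    ((((3 * k + 1 : ℕ) : ℝ) * (3 * k + 2) * (3 * k + 3)) * ((3 * k)! * (3 * k)!)) ≠ 0) key
  rw [this]
  push_cast
  ring

noncomputable def tele (n : ℕ) : ℝ :=
  -512 * n * (3 * n - 1) * (3 * n - 2) * (Nat.choose (6 * n) (3 * n)) /
    ((2 * (n : ℝ) - 1) * (6 * n - 1) * (6 * n - 5) * 4096 ^ n)

lemma den_ne (n : ℕ) : (2 * (n : ℝ) - 1) ≠ 0 ∧ (6 * (n : ℝ) - 1) ≠ 0 ∧ (6 * (n : ℝ) - 5) ≠ 0 := by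
  rcases n with _ | m
  · norm_num
  · push_cast
    have hx : (0:ℝ) ≤ (m:ℝ) := Nat.cast_nonneg m
    refine ⟨?_, ?_, ?_⟩ <;> · intro h; nlinarith [hx]

lemma den_abs_ge (n : ℕ) : 1 ≤ |(2 * (n : ℝ) - 1) * (6 * n - 1) * (6 * n - 5)| := by
  rcases n with _ | m
  · norm_num
  · push_cast
    have hx : (0:ℝ) ≤ (m:ℝ) := Nat.cast_nonneg m
    rw [abs_of_nonneg (by nlinarith [hx, mul_nonneg hx hx, mul_nonneg (mul_nonneg hx hx) hx])]
    nlinarith [hx, mul_nonneg hx hx, mul_nonneg (mul_nonneg hx hx) hx]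

lemma tele_step (k : ℕ) :
    (4536 * (k : ℝ) ^ 3 - 4500 * k ^ 2 + 978 * k + 5) * (Nat.choose (6 * k) (3 * k)) /
        ((2 * (k : ℝ) - 1) * (6 * k - 1) * (6 * k - 5) * 4096 ^ k) =
      tele (k + 1) - tele k := by
  obtain ⟨ha, hb, hc⟩ := den_ne k
  obtain ⟨ha', hb', hc'⟩ := den_ne (k + 1)
  push_cast at ha' hb' hc'
  have hrec := choose_rec k
  have hch : (Nat.choose (6 * (k + 1)) (3 * (k + 1)) : ℝ) =
      24 * (6 * k + 1) * (2 * k + 1) * (6 * k + 5) * (Nat.choose (6 * k) (3 * k)) /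
        ((3 * (k : ℝ) + 1) * (3 * k + 2) * (3 * k + 3)) := by
    rw [eq_div_iff (by positivity)]
    rw [show 6 * (k + 1) = 6 * k + 6 by ring, show 3 * (k + 1) = 3 * k + 3 by ring]
    push_cast at hrec ⊢
    linarith [hrec]
  unfold tele
  rw [hch]
  push_cast
  have hp : (4096 : ℝ) ^ k ≠ 0 := by positivity
  have hq : (3 * (k : ℝ) + 1) * (3 * k + 2) * (3 * k + 3) ≠ 0 := by positivity
  have hd : (2 * (k : ℝ) - 1) * (6 * k - 1) * (6 * k - 5) ≠ 0 := mul_ne_zero (mul_ne_zero ha hb) hc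
  have hd' : (2 * ((k : ℝ) + 1) - 1) * (6 * (k + 1) - 1) * (6 * (k + 1) - 5) ≠ 0 := mul_ne_zero (mul_ne_zero ha' hb') hc'
  rw [eq_sub_iff_add_eq, ← add_div, div_eq_div_iff (mul_ne_zero hd hp) (mul_ne_zero hd' (pow_ne_zero _ (by norm_num)))]
  field_simp
  ring


lemma cube_le (k : ℕ) : ((k : ℝ)) ≤ 8 ^ k ∧ (k : ℝ)^2 ≤ 8 ^ k ∧ (k : ℝ)^3 ≤ 8 ^ k ∧ (1:ℝ) ≤ 8 ^ k := by
  have h2 : (k : ℝ) ≤ 2 ^ k := by exact_mod_cast (Nat.lt_two_pow_self (n := k)).le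
  have hk : (0:ℝ) ≤ (k:ℝ) := Nat.cast_nonneg k
  have h8 : ((2:ℝ) ^ k) ^ 3 = 8 ^ k := by
    rw [← pow_mul, show k * 3 = 3 * k by ring, pow_mul]; norm_num
  have h4 : ((2:ℝ) ^ k) ^ 2 = 4 ^ k := by
    rw [← pow_mul, show k * 2 = 2 * k by ring, pow_mul]; norm_num
  have h48 : (4:ℝ) ^ k ≤ 8 ^ k := by
    apply pow_le_pow_left₀ (by norm_num) (by norm_num)
  have h28 : (2:ℝ) ^ k ≤ 8 ^ k := by
    apply pow_le_pow_left₀ (by norm_num) (by norm_num)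
  refine ⟨h2.trans h28, ?_, ?_, one_le_pow₀ (by norm_num)⟩
  · calc (k:ℝ)^2 ≤ ((2:ℝ)^k)^2 := by apply pow_le_pow_left₀ hk h2
      _ = 4 ^ k := h4
      _ ≤ 8 ^ k := h48
  · calc (k:ℝ)^3 ≤ ((2:ℝ)^k)^3 := by apply pow_le_pow_left₀ hk h2
      _ = 8 ^ k := h8

lemma ch_cast_le (k : ℕ) : ((Nat.choose (6 * k) (3 * k) : ℝ)) ≤ 64 ^ k := by
  exact_mod_cast Nat.cast_le.mpr (choose_6k_le k)

lemma pow_split (k : ℕ) : ((4096:ℝ)) ^ k = 8 ^ k * (8 ^ k * 64 ^ k) := by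
  rw [← mul_pow, ← mul_pow]; norm_num

lemma term_bound (k : ℕ) :
    |(4536 * (k : ℝ) ^ 3 - 4500 * k ^ 2 + 978 * k + 5) * (Nat.choose (6 * k) (3 * k)) /
        ((2 * (k : ℝ) - 1) * (6 * k - 1) * (6 * k - 5) * 4096 ^ k)| ≤ 10019 * (1/8:ℝ) ^ k := by
  obtain ⟨h1, h2, h3, h0⟩ := cube_le k
  have hk : (0:ℝ) ≤ (k:ℝ) := Nat.cast_nonneg k
  have hnum : |4536 * (k : ℝ) ^ 3 - 4500 * k ^ 2 + 978 * k + 5| ≤ 10019 * 8 ^ k := by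
    rw [abs_le]
    constructor <;> nlinarith [sq_nonneg ((k:ℝ)), pow_nonneg hk 3]
  have hC : (0:ℝ) ≤ (Nat.choose (6 * k) (3 * k) : ℝ) := Nat.cast_nonneg _
  have hNC : |(4536 * (k : ℝ) ^ 3 - 4500 * k ^ 2 + 978 * k + 5) *
      (Nat.choose (6 * k) (3 * k))| ≤ (10019 * 8 ^ k) * 64 ^ k := by
    rw [abs_mul, abs_of_nonneg hC]
    exact mul_le_mul hnum (ch_cast_le k) hC (by positivity)
  have hD : (4096:ℝ) ^ k ≤ |(2 * (k : ℝ) - 1) * (6 * k - 1) * (6 * k - 5) * 4096 ^ k| := by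
    rw [abs_mul, abs_of_nonneg (by positivity : (0:ℝ) ≤ (4096:ℝ)^k)]
    calc (4096:ℝ) ^ k = 1 * 4096 ^ k := (one_mul _).symm
      _ ≤ |(2 * (k : ℝ) - 1) * (6 * k - 1) * (6 * k - 5)| * 4096 ^ k :=
        mul_le_mul_of_nonneg_right (den_abs_ge k) (by positivity)
  rw [abs_div]
  calc _ ≤ ((10019 * 8 ^ k) * 64 ^ k) / ((4096:ℝ) ^ k) :=
        div_le_div₀ (by positivity) hNC (by positivity) hD
    _ = 10019 * (1/8:ℝ) ^ k := by
        rw [pow_split, div_pow, one_pow]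
        field_simp

lemma tele_bound (n : ℕ) : |tele n| ≤ 5632 * (1/8:ℝ) ^ n := by
  obtain ⟨h1, h2, h3, h0⟩ := cube_le n
  have hk : (0:ℝ) ≤ (n:ℝ) := Nat.cast_nonneg n
  have hnum : |(-512 : ℝ) * n * (3 * n - 1) * (3 * n - 2)| ≤ 5632 * 8 ^ n := by
    rw [abs_le]
    have : (0:ℝ) ≤ (n:ℝ) * (3 * n - 1) * (3 * n - 2) := by
      rcases n with _ | m
      · norm_num
      · have hm : (0:ℝ) ≤ (m:ℝ) := Nat.cast_nonneg m
        push_cast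
        nlinarith [hm, mul_nonneg hm hm, mul_nonneg (mul_nonneg hm hm) hm]
    constructor <;> nlinarith [mul_nonneg hk hk, mul_nonneg (mul_nonneg hk hk) hk]
  have hC : (0:ℝ) ≤ (Nat.choose (6 * n) (3 * n) : ℝ) := Nat.cast_nonneg _
  have hNC : |(-512 : ℝ) * n * (3 * n - 1) * (3 * n - 2) *
      (Nat.choose (6 * n) (3 * n))| ≤ (5632 * 8 ^ n) * 64 ^ n := by
    rw [abs_mul, abs_of_nonneg hC]
    exact mul_le_mul hnum (ch_cast_le n) hC (by positivity)
  have hD : (4096:ℝ) ^ n ≤ |(2 * (n : ℝ) - 1) * (6 * n - 1) * (6 * n - 5) * 4096 ^ n| := by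
    rw [abs_mul, abs_of_nonneg (by positivity : (0:ℝ) ≤ (4096:ℝ)^n)]
    calc (4096:ℝ) ^ n = 1 * 4096 ^ n := (one_mul _).symm
      _ ≤ |(2 * (n : ℝ) - 1) * (6 * n - 1) * (6 * n - 5)| * 4096 ^ n :=
        mul_le_mul_of_nonneg_right (den_abs_ge n) (by positivity)
  unfold tele
  rw [abs_div]
  calc _ ≤ ((5632 * 8 ^ n) * 64 ^ n) / ((4096:ℝ) ^ n) :=
        div_le_div₀ (by positivity) hNC (by positivity) hD
    _ = 5632 * (1/8:ℝ) ^ n := by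
        rw [pow_split, div_pow, one_pow]
        field_simp

theorem series_stmt_14 :
    HasSum (fun k : ℕ =>
      (4536 * (k : ℝ) ^ 3 - 4500 * k ^ 2 + 978 * k + 5) * (Nat.choose (6 * k) (3 * k)) /
        ((2 * (k : ℝ) - 1) * (6 * k - 1) * (6 * k - 5) * 4096 ^ k))
      0 := by
  have hS : Summable (fun k : ℕ =>
      (4536 * (k : ℝ) ^ 3 - 4500 * k ^ 2 + 978 * k + 5) * (Nat.choose (6 * k) (3 * k)) /
        ((2 * (k : ℝ) - 1) * (6 * k - 1) * (6 * k - 5) * 4096 ^ k)) := by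
    apply Summable.of_norm
    have hgeo : Summable (fun k : ℕ => 10019 * (1/8:ℝ) ^ k) :=
      (summable_geometric_of_lt_one (by norm_num) (by norm_num)).mul_left 10019
    refine Summable.of_nonneg_of_le (fun k => norm_nonneg _) (fun k => ?_) hgeo
    simpa only [Real.norm_eq_abs, one_div] using term_bound k
  rw [Summable.hasSum_iff_tendsto_nat hS]
  have hps : ∀ n : ℕ, (∑ i ∈ Finset.range n,
      (4536 * (i : ℝ) ^ 3 - 4500 * i ^ 2 + 978 * i + 5) * (Nat.choose (6 * i) (3 * i)) /
        ((2 * (i : ℝ) - 1) * (6 * i - 1) * (6 * i - 5) * 4096 ^ i)) = tele n := by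
    intro n
    calc _ = ∑ i ∈ Finset.range n, (tele (i + 1) - tele i) :=
          Finset.sum_congr rfl (fun i _ => tele_step i)
      _ = tele n - tele 0 := Finset.sum_range_sub tele n
      _ = tele n := by simp [tele]
  simp only [hps]
  apply squeeze_zero_norm (fun n => by simpa [Real.norm_eq_abs] using tele_bound n)
  have : Filter.Tendsto (fun n : ℕ => (1/8:ℝ) ^ n) Filter.atTop (nhds 0) :=
    tendsto_pow_atTop_nhds_zero_of_lt_one (by norm_num) (by norm_num)
  simpa using this.const_mul (5632:ℝ)
end

section
/- The infinite series ∑_{k=0}^∞ (4536k³-4644k²+1074k+25)·C(6k,3k) / ((6k-5)·4096^k) converges and equals 0. -/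
open Filter Finset Topology

noncomputable def bb (k : ℕ) : ℝ :=
  512 * k * (3 * (k:ℝ) - 1) * (3 * (k:ℝ) - 2) * (Nat.choose (6 * k) (3 * k)) /
    ((6 * (k:ℝ) - 5) * 4096 ^ k)

lemma keyc (k : ℕ) :
    (Nat.choose (6 * (k+1)) (3 * (k+1)) : ℝ) *
      ((3*(k:ℝ)+1) * (3*(k:ℝ)+2) * (3*(k:ℝ)+3))^2
    = (Nat.choose (6 * k) (3 * k) : ℝ) *
      ((6*(k:ℝ)+1)*(6*(k:ℝ)+2)*(6*(k:ℝ)+3)*(6*(k:ℝ)+4)*(6*(k:ℝ)+5)*(6*(k:ℝ)+6)) := by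
  have h1 : (Nat.choose (6*k) (3*k) : ℝ) * (3*k).factorial * (3*k).factorial
      = ((6*k).factorial : ℝ) := by
    have h := Nat.choose_mul_factorial_mul_factorial (show 3*k ≤ 6*k by omega)
    rw [show 6*k - 3*k = 3*k by omega] at h
    exact_mod_cast h
  have h2 : (Nat.choose (6*(k+1)) (3*(k+1)) : ℝ) * (3*(k+1)).factorial * (3*(k+1)).factorial
      = ((6*(k+1)).factorial : ℝ) := by
    have h := Nat.choose_mul_factorial_mul_factorial (show 3*(k+1) ≤ 6*(k+1) by omega)
    rw [show 6*(k+1) - 3*(k+1) = 3*(k+1) by omega] at h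
    exact_mod_cast h
  have hf6 : ((6*(k+1)).factorial : ℝ)
      = (6*(k:ℝ)+1)*(6*(k:ℝ)+2)*(6*(k:ℝ)+3)*(6*(k:ℝ)+4)*(6*(k:ℝ)+5)*(6*(k:ℝ)+6)
        * ((6*k).factorial : ℝ) := by
    rw [show 6*(k+1) = (6*k+5)+1 from by ring, Nat.factorial_succ,
        show 6*k+5 = (6*k+4)+1 from by ring, Nat.factorial_succ,
        show 6*k+4 = (6*k+3)+1 from by ring, Nat.factorial_succ,
        show 6*k+3 = (6*k+2)+1 from by ring, Nat.factorial_succ,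
        show 6*k+2 = (6*k+1)+1 from by ring, Nat.factorial_succ,
        show 6*k+1 = (6*k)+1 from by ring, Nat.factorial_succ]
    push_cast; ring
  have hf3 : ((3*(k+1)).factorial : ℝ)
      = (3*(k:ℝ)+1)*(3*(k:ℝ)+2)*(3*(k:ℝ)+3) * ((3*k).factorial : ℝ) := by
    rw [show 3*(k+1) = (3*k+2)+1 from by ring, Nat.factorial_succ,
        show 3*k+2 = (3*k+1)+1 from by ring, Nat.factorial_succ,
        show 3*k+1 = (3*k)+1 from by ring, Nat.factorial_succ]
    push_cast; ring
  have hx : ((3*k).factorial : ℝ) ≠ 0 := by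
    exact_mod_cast (Nat.factorial_pos _).ne'
  apply mul_right_cancel₀ (mul_ne_zero hx hx)
  rw [hf3, hf6, ← h1] at h2
  linear_combination h2

lemma tele_s15 (k : ℕ) :
    (4536 * (k : ℝ) ^ 3 - 4644 * k ^ 2 + 1074 * k + 25) * (Nat.choose (6 * k) (3 * k)) /
        ((6 * (k : ℝ) - 5) * 4096 ^ k) = bb k - bb (k+1) := by
  have hk0 : (0:ℝ) ≤ (k:ℝ) := Nat.cast_nonneg k
  have h5 : (6*(k:ℝ) - 5) ≠ 0 := by
    intro h
    have : (6*k : ℕ) ≠ 5 := by omega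
    apply this
    have : (6*(k:ℝ)) = 5 := by linarith
    exact_mod_cast this
  have h61 : (6*((k:ℝ)+1) - 5) ≠ 0 := by nlinarith
  have hp : (4096:ℝ)^k ≠ 0 := by positivity
  have hA : ((3*(k:ℝ)+1) * (3*(k:ℝ)+2) * (3*(k:ℝ)+3))^2 ≠ 0 := by positivity
  have hck : (Nat.choose (6*(k+1)) (3*(k+1)) : ℝ)
      = (Nat.choose (6*k) (3*k) : ℝ) *
        ((6*(k:ℝ)+1)*(6*(k:ℝ)+2)*(6*(k:ℝ)+3)*(6*(k:ℝ)+4)*(6*(k:ℝ)+5)*(6*(k:ℝ)+6))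
        / ((3*(k:ℝ)+1) * (3*(k:ℝ)+2) * (3*(k:ℝ)+3))^2 := by
    rw [eq_div_iff hA]
    exact keyc k
  unfold bb
  rw [hck]
  push_cast
  have h5' : (k:ℝ)*6 - 5 ≠ 0 := by rw [mul_comm]; exact h5
  field_simp
  ring

lemma sumpoly (a b c d : ℝ) :
    Summable (fun n : ℕ => (a*(n:ℝ)^3 + b*(n:ℝ)^2 + c*(n:ℝ) + d) * (1/64:ℝ)^n) := by
  have hr : ‖(1/64:ℝ)‖ < 1 := by norm_num
  have h3 := (summable_pow_mul_geometric_of_norm_lt_one 3 hr (R := ℝ)).mul_left a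
  have h2 := (summable_pow_mul_geometric_of_norm_lt_one 2 hr (R := ℝ)).mul_left b
  have h1 := (summable_pow_mul_geometric_of_norm_lt_one 1 hr (R := ℝ)).mul_left c
  have h0 := (summable_pow_mul_geometric_of_norm_lt_one 0 hr (R := ℝ)).mul_left d
  have := ((h3.add h2).add h1).add h0
  refine this.congr fun n => by ring

lemma choose_le (k : ℕ) : ((Nat.choose (6*k) (3*k) : ℝ)) ≤ 64 ^ k := by
  have h : Nat.choose (6*k) (3*k) ≤ 2 ^ (6*k) := by
    rw [← Nat.sum_range_choose (6*k)]
    exact Finset.single_le_sum (fun i _ => Nat.zero_le _) (Finset.mem_range.mpr (by omega))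
  have h2 : (2:ℕ) ^ (6*k) = 64 ^ k := by
    rw [pow_mul]; norm_num
  rw [h2] at h
  exact_mod_cast h

lemma abs_denom (k : ℕ) : (1:ℝ) ≤ |6*(k:ℝ) - 5| := by
  rcases Nat.eq_zero_or_pos k with h | h
  · subst h; norm_num
  · have : (1:ℝ) ≤ (k:ℝ) := by exact_mod_cast h
    rw [abs_of_nonneg (by linarith)]; linarith

lemma div_abs_le (A d p : ℝ) (hd : 1 ≤ |d|) (hp : 0 < p) : |A / (d*p)| ≤ |A| / p := by
  rw [abs_div, abs_mul, abs_of_pos hp]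
  gcongr
  exact le_mul_of_one_le_left hp.le hd

lemma hq64 (k : ℕ) : (64:ℝ)^k / 4096^k = (1/64)^k := by
  rw [← div_pow]; norm_num

lemma hbf (k : ℕ) :
    ‖(4536 * (k : ℝ) ^ 3 - 4644 * k ^ 2 + 1074 * k + 25) * (Nat.choose (6 * k) (3 * k)) /
        ((6 * (k : ℝ) - 5) * 4096 ^ k)‖
      ≤ (4536*(k:ℝ)^3 + 4644*(k:ℝ)^2 + 1074*(k:ℝ) + 25) * (1/64:ℝ)^k := by
  have hk0 : (0:ℝ) ≤ (k:ℝ) := Nat.cast_nonneg k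
  rw [Real.norm_eq_abs]
  calc |(4536 * (k : ℝ) ^ 3 - 4644 * k ^ 2 + 1074 * k + 25) * (Nat.choose (6 * k) (3 * k)) /
        ((6 * (k : ℝ) - 5) * 4096 ^ k)|
      ≤ |(4536 * (k : ℝ) ^ 3 - 4644 * k ^ 2 + 1074 * k + 25) * (Nat.choose (6 * k) (3 * k))|
          / 4096 ^ k := div_abs_le _ _ _ (abs_denom k) (by positivity)
    _ = |4536 * (k : ℝ) ^ 3 - 4644 * k ^ 2 + 1074 * k + 25| * (Nat.choose (6 * k) (3 * k))
          / 4096 ^ k := by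
        rw [abs_mul, Nat.abs_cast]
    _ ≤ (4536*(k:ℝ)^3 + 4644*(k:ℝ)^2 + 1074*(k:ℝ) + 25) * 64^k / 4096^k := by
        gcongr
        · exact abs_le.mpr ⟨by nlinarith, by nlinarith⟩
        · exact choose_le k
    _ = (4536*(k:ℝ)^3 + 4644*(k:ℝ)^2 + 1074*(k:ℝ) + 25) * (1/64:ℝ)^k := by
        rw [mul_div_assoc, hq64]

lemma hbbb (n : ℕ) :
    ‖bb n‖ ≤ (4608*(n:ℝ)^3 + 9216*(n:ℝ)^2 + 5632*(n:ℝ) + 1024) * (1/64:ℝ)^n := by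
  have hk0 : (0:ℝ) ≤ (n:ℝ) := Nat.cast_nonneg n
  rw [Real.norm_eq_abs, bb]
  calc |512 * n * (3 * (n:ℝ) - 1) * (3 * (n:ℝ) - 2) * (Nat.choose (6 * n) (3 * n)) /
    ((6 * (n:ℝ) - 5) * 4096 ^ n)|
      ≤ |512 * n * (3 * (n:ℝ) - 1) * (3 * (n:ℝ) - 2) * (Nat.choose (6 * n) (3 * n))|
          / 4096 ^ n := div_abs_le _ _ _ (abs_denom n) (by positivity)
    _ = |512 * (n:ℝ) * (3 * (n:ℝ) - 1) * (3 * (n:ℝ) - 2)| * (Nat.choose (6 * n) (3 * n))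
          / 4096 ^ n := by
        rw [abs_mul, Nat.abs_cast]
    _ ≤ (4608*(n:ℝ)^3 + 9216*(n:ℝ)^2 + 5632*(n:ℝ) + 1024) * 64^n / 4096^n := by
        gcongr
        · exact abs_le.mpr ⟨by nlinarith, by nlinarith⟩
        · exact choose_le n
    _ = (4608*(n:ℝ)^3 + 9216*(n:ℝ)^2 + 5632*(n:ℝ) + 1024) * (1/64:ℝ)^n := by
        rw [mul_div_assoc, hq64]

theorem series_stmt_15 :
    HasSum (fun k : ℕ =>
      (4536 * (k : ℝ) ^ 3 - 4644 * k ^ 2 + 1074 * k + 25) * (Nat.choose (6 * k) (3 * k)) /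
        ((6 * (k : ℝ) - 5) * 4096 ^ k))
      0 := by
  have hsum : Summable (fun k : ℕ =>
      (4536 * (k : ℝ) ^ 3 - 4644 * k ^ 2 + 1074 * k + 25) * (Nat.choose (6 * k) (3 * k)) /
        ((6 * (k : ℝ) - 5) * 4096 ^ k)) :=
    Summable.of_norm_bounded (sumpoly 4536 4644 1074 25) hbf
  rw [hsum.hasSum_iff_tendsto_nat]
  have hps : ∀ n, (∑ i ∈ Finset.range n,
      (4536 * (i : ℝ) ^ 3 - 4644 * i ^ 2 + 1074 * i + 25) * (Nat.choose (6 * i) (3 * i)) /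
        ((6 * (i : ℝ) - 5) * 4096 ^ i)) = - bb n := by
    intro n
    rw [Finset.sum_congr rfl fun i _ => tele_s15 i, Finset.sum_range_sub' bb n]
    simp [bb]
  simp only [hps]
  have htend : Tendsto bb atTop (𝓝 0) :=
    squeeze_zero_norm hbbb (sumpoly 4608 9216 5632 1024).tendsto_atTop_zero
  simpa using htend.neg
end

section
/- The identity ∑_{k=0}^∞ (3k+2)²·16^k / ((2k+1)(6k+1)(6k+5)·C(6k,3k)) = π/(2√3) holds if and only if the identity ∑_{k=0}^∞ 16^k·(54k²-36k-12) / ((6k+1)·C(6k,3k)) = -4 - π/√3 holds (both series converge at geometric rates). -/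
noncomputable def tt (k : ℕ) : ℝ := 16 ^ k * (12 * k - 4) / Nat.centralBinom (3 * k)

lemma cb_pos (k : ℕ) : (0:ℝ) < Nat.centralBinom (3 * k) := by
  exact_mod_cast Nat.centralBinom_pos (3 * k)

lemma choose_eq_cb (k : ℕ) : Nat.choose (6 * k) (3 * k) = Nat.centralBinom (3 * k) := by
  rw [Nat.centralBinom]; congr 1; ring

lemma cb_rel (k : ℕ) :
    (3 * (k:ℝ) + 1) * (3 * k + 2) * (3 * k + 3) * Nat.centralBinom (3 * (k+1))
      = 8 * (6 * k + 1) * (6 * k + 3) * (6 * k + 5) * Nat.centralBinom (3 * k) := by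
  have h1 := Nat.succ_mul_centralBinom_succ (3 * k)
  have h2 := Nat.succ_mul_centralBinom_succ (3 * k + 1)
  have h3 := Nat.succ_mul_centralBinom_succ (3 * k + 2)
  have e : 3 * (k + 1) = 3 * k + 2 + 1 := by ring
  rw [e]
  have h1' : ((3*k:ℕ) + 1 : ℝ) * Nat.centralBinom (3*k+1) = 2 * (2*(3*k:ℕ)+1) * Nat.centralBinom (3*k) := by exact_mod_cast congrArg (Nat.cast : ℕ → ℝ) h1
  have h2' : ((3*k+1:ℕ) + 1 : ℝ) * Nat.centralBinom (3*k+1+1) = 2 * (2*(3*k+1:ℕ)+1) * Nat.centralBinom (3*k+1) := by exact_mod_cast congrArg (Nat.cast : ℕ → ℝ) h2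
  have h3' : ((3*k+2:ℕ) + 1 : ℝ) * Nat.centralBinom (3*k+2+1) = 2 * (2*(3*k+2:ℕ)+1) * Nat.centralBinom (3*k+2) := by exact_mod_cast congrArg (Nat.cast : ℕ → ℝ) h3
  push_cast at h1' h2' h3'
  have : (3*k+1+1 : ℕ) = 3*k+2 := by ring
  rw [this] at h2'
  linear_combination (3*(k:ℝ)+2)*(3*k+1)*h3' + 2*(6*(k:ℝ)+5)*(3*k+1)*h2' + 4*(6*(k:ℝ)+5)*(6*k+3)*h1'

lemma key (k : ℕ) :
    (16 : ℝ) ^ k * (54 * (k : ℝ) ^ 2 - 36 * k - 12) /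
        ((6 * (k : ℝ) + 1) * (Nat.choose (6 * k) (3 * k)))
      = (tt k - tt (k+1)) - 2 * ((3 * (k : ℝ) + 2) ^ 2 * 16 ^ k /
          ((2 * (k : ℝ) + 1) * (6 * k + 1) * (6 * k + 5) * (Nat.choose (6 * k) (3 * k)))) := by
  have hx := cb_pos k
  have hy := cb_pos (k+1)
  have hrel := cb_rel k
  rw [choose_eq_cb]
  set x : ℝ := (Nat.centralBinom (3 * k) : ℝ) with hxdef
  set y : ℝ := (Nat.centralBinom (3 * (k+1)) : ℝ) with hydef
  have hy2 : y = 8 * (6 * (k:ℝ) + 1) * (6 * k + 3) * (6 * k + 5) * x /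
      ((3 * (k:ℝ) + 1) * (3 * k + 2) * (3 * k + 3)) := by
    rw [eq_div_iff (by positivity)]
    linarith [hrel]
  unfold tt
  rw [← hxdef, ← hydef, hy2]
  push_cast
  have h1 : (2 * (k:ℝ) + 1) ≠ 0 := by positivity
  have h2 : (6 * (k:ℝ) + 1) ≠ 0 := by positivity
  have h3 : (6 * (k:ℝ) + 5) ≠ 0 := by positivity
  have h4 : (3 * (k:ℝ) + 1) ≠ 0 := by positivity
  have h5 : (3 * (k:ℝ) + 2) ≠ 0 := by positivity
  have h6 : (3 * (k:ℝ) + 3) ≠ 0 := by positivity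
  field_simp
  ring

lemma tt_abs_le (k : ℕ) : |tt k| ≤ (12 * (k:ℝ) + 4) * (6 * k + 1) * (1/4) ^ k := by
  have hx := cb_pos k
  have h64 : (64:ℝ) ^ k ≤ (6 * (k:ℝ) + 1) * Nat.centralBinom (3 * k) := by
    rcases Nat.eq_zero_or_pos k with rfl | hk
    · simp [Nat.centralBinom]
    · have := Nat.four_pow_le_two_mul_self_mul_centralBinom (3 * k) (by omega)
      have h' : ((4:ℕ) ^ (3 * k) : ℝ) ≤ ((2 * (3 * k) : ℕ) * Nat.centralBinom (3 * k) : ℝ) := by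
        exact_mod_cast this
      push_cast at h'
      calc (64:ℝ)^k = 4 ^ (3 * k) := by rw [pow_mul]; norm_num
        _ ≤ 2 * (3 * k) * Nat.centralBinom (3*k) := h'
        _ ≤ (6 * (k:ℝ) + 1) * Nat.centralBinom (3*k) := by
            apply mul_le_mul_of_nonneg_right (by linarith) (le_of_lt hx)
  have hinv : (Nat.centralBinom (3 * k) : ℝ)⁻¹ ≤ (6 * (k:ℝ) + 1) / 64 ^ k := by
    rw [inv_le_iff_one_le_mul₀ hx]
    rw [div_mul_eq_mul_div, le_div_iff₀ (by positivity)]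
    nlinarith [hx]
  have habs : |tt k| ≤ 16 ^ k * (12 * (k:ℝ) + 4) / Nat.centralBinom (3 * k) := by
    unfold tt
    rw [abs_div, abs_of_pos hx, div_le_div_iff₀ hx hx, abs_mul]
    have h16 : |(16:ℝ) ^ k| = 16 ^ k := abs_of_pos (by positivity)
    rw [h16]
    have habs2 : |12 * (k:ℝ) - 4| ≤ 12 * k + 4 := by
      rw [abs_le]
      constructor <;> [linarith [Nat.cast_nonneg (α := ℝ) k]; linarith [Nat.cast_nonneg (α := ℝ) k]]
    apply mul_le_mul_of_nonneg_right _ hx.le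
    exact mul_le_mul_of_nonneg_left habs2 (by positivity)
  calc |tt k| ≤ 16 ^ k * (12 * (k:ℝ) + 4) / Nat.centralBinom (3 * k) := habs
    _ = 16 ^ k * (12 * (k:ℝ) + 4) * (Nat.centralBinom (3 * k) : ℝ)⁻¹ := by rw [div_eq_mul_inv]
    _ ≤ 16 ^ k * (12 * (k:ℝ) + 4) * ((6 * (k:ℝ) + 1) / 64 ^ k) := by
        apply mul_le_mul_of_nonneg_left hinv (by positivity)
    _ = (12 * (k:ℝ) + 4) * (6 * k + 1) * (1/4) ^ k := by
        rw [div_pow, one_pow]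
        have h64' : (64:ℝ) ^ k = 16 ^ k * 4 ^ k := by rw [← mul_pow]; norm_num
        field_simp [h64']
        rw [h64']

lemma summable_bound : Summable (fun k : ℕ => (12 * (k:ℝ) + 4) * (6 * k + 1) * (1/4) ^ k) := by
  have h : ‖(1/4 : ℝ)‖ < 1 := by rw [Real.norm_eq_abs, abs_of_nonneg] <;> norm_num
  have h2 := summable_pow_mul_geometric_of_norm_lt_one (R := ℝ) 2 h
  have h1 := summable_pow_mul_geometric_of_norm_lt_one (R := ℝ) 1 h
  have h0 := summable_pow_mul_geometric_of_norm_lt_one (R := ℝ) 0 h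
  have := ((h2.mul_left 72).add (h1.mul_left 36)).add (h0.mul_left 4)
  apply this.congr
  intro k
  ring

lemma summable_tt : Summable tt := by
  apply Summable.of_abs
  apply Summable.of_nonneg_of_le (fun k => abs_nonneg _) tt_abs_le summable_bound

lemma tt_tendsto : Filter.Tendsto tt Filter.atTop (nhds 0) :=
  summable_tt.tendsto_atTop_zero

lemma hasSum_tel : HasSum (fun k => tt k - tt (k+1)) (-4) := by
  have hs : Summable (fun k => tt k - tt (k+1)) :=
    summable_tt.sub ((summable_nat_add_iff 1).2 summable_tt)
  rw [hs.hasSum_iff_tendsto_nat]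
  have hsum : ∀ n, ∑ i ∈ Finset.range n, (tt i - tt (i+1)) = tt 0 - tt n := by
    intro n
    exact Finset.sum_range_sub' tt n
  simp_rw [hsum]
  have h0 : tt 0 = -4 := by norm_num [tt, Nat.centralBinom]
  rw [h0]
  have := (tendsto_const_nhds (x := (-4:ℝ)) (f := Filter.atTop)).sub tt_tendsto
  simpa using this

theorem series_stmt_16 :
    HasSum (fun k : ℕ =>
        (3 * (k : ℝ) + 2) ^ 2 * 16 ^ k /
          ((2 * (k : ℝ) + 1) * (6 * k + 1) * (6 * k + 5) * (Nat.choose (6 * k) (3 * k))))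
      (Real.pi / (2 * Real.sqrt 3))
    ↔ HasSum (fun k : ℕ =>
        (16 : ℝ) ^ k * (54 * (k : ℝ) ^ 2 - 36 * k - 12) /
          ((6 * (k : ℝ) + 1) * (Nat.choose (6 * k) (3 * k))))
      (-4 - Real.pi / Real.sqrt 3) := by
  have hs3 : Real.sqrt 3 ≠ 0 := by positivity
  constructor
  · intro ha
    have := hasSum_tel.add (ha.mul_left (-2))
    have heq : (fun k => (tt k - tt (k+1)) + (-2) * ((3 * (k : ℝ) + 2) ^ 2 * 16 ^ k /
          ((2 * (k : ℝ) + 1) * (6 * k + 1) * (6 * k + 5) * (Nat.choose (6 * k) (3 * k)))))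
        = fun k : ℕ => (16 : ℝ) ^ k * (54 * (k : ℝ) ^ 2 - 36 * k - 12) /
          ((6 * (k : ℝ) + 1) * (Nat.choose (6 * k) (3 * k))) := by
      funext k
      rw [key k]
      ring
    rw [heq] at this
    convert this using 1
    field_simp
    ring
  · intro hb
    have := (hasSum_tel.add (hb.mul_left (-1))).mul_left (1/2)
    have heq : (fun k => (1/2 : ℝ) * ((tt k - tt (k+1)) + (-1) * ((16 : ℝ) ^ k * (54 * (k : ℝ) ^ 2 - 36 * k - 12) /
          ((6 * (k : ℝ) + 1) * (Nat.choose (6 * k) (3 * k))))))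
        = fun k : ℕ => (3 * (k : ℝ) + 2) ^ 2 * 16 ^ k /
          ((2 * (k : ℝ) + 1) * (6 * k + 1) * (6 * k + 5) * (Nat.choose (6 * k) (3 * k))) := by
      funext k
      rw [key k]
      ring
    rw [heq] at this
    convert this using 1
    · rfl
    ring
end

section
/- The identity ∑_{k=0}^∞ (6k-1)·C(6k,3k) / 256^k = -2/(3√3) holds if and only if the identity ∑_{k=0}^∞ k·C(6k,3k) / ((6k-1)(6k-5)·256^k) = √3/108 holds (both series converge at geometric rates). -/
open Filter Finset Nat

noncomputable def sF (k : ℕ) : ℝ :=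
  (6 * (k : ℝ) - 1) * (Nat.choose (6 * k) (3 * k)) / 256 ^ k

noncomputable def sG (k : ℕ) : ℝ :=
  (k : ℝ) * (Nat.choose (6 * k) (3 * k)) /
    ((6 * (k : ℝ) - 1) * (6 * k - 5) * 256 ^ k)

noncomputable def sT (k : ℕ) : ℝ :=
  32 * (k : ℝ) * (3 * k - 1) * (3 * k - 2) * (Nat.choose (6 * k) (3 * k)) /
    ((6 * (k : ℝ) - 1) * (6 * k - 5) * 256 ^ k)

lemma hne1 (k : ℕ) : (6 * (k : ℝ) - 1) ≠ 0 := by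
  intro h
  have h' : (6 * k : ℝ) = 1 := by linarith
  have : 6 * k = 1 := by exact_mod_cast h'
  omega

lemma hne5 (k : ℕ) : (6 * (k : ℝ) - 5) ≠ 0 := by
  intro h
  have h' : (6 * k : ℝ) = 5 := by linarith
  have : 6 * k = 5 := by exact_mod_cast h'
  omega

lemma cast_choose6 (k : ℕ) :
    (Nat.choose (6 * k) (3 * k) : ℝ) = (6 * k)! / ((3 * k)! * (3 * k)!) := by
  have h : 6 * k - 3 * k = 3 * k := by omega
  rw [Nat.cast_choose ℝ (by omega : 3 * k ≤ 6 * k), h]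

lemma fact6 (k : ℕ) : ((6 * (k + 1))! : ℝ) =
    (6 * (k : ℝ) + 6) * (6 * k + 5) * (6 * k + 4) * (6 * k + 3) * (6 * k + 2) * (6 * k + 1)
      * (6 * k)! := by
  have h : 6 * (k + 1) = 6 * k + 1 + 1 + 1 + 1 + 1 + 1 := by ring
  rw [h, Nat.factorial_succ, Nat.factorial_succ, Nat.factorial_succ, Nat.factorial_succ,
    Nat.factorial_succ, Nat.factorial_succ]
  push_cast
  ring

lemma fact3 (k : ℕ) : ((3 * (k + 1))! : ℝ) =
    (3 * (k : ℝ) + 3) * (3 * k + 2) * (3 * k + 1) * (3 * k)! := by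
  have h : 3 * (k + 1) = 3 * k + 1 + 1 + 1 := by ring
  rw [h, Nat.factorial_succ, Nat.factorial_succ, Nat.factorial_succ]
  push_cast
  ring

lemma step' (k : ℕ) :
    (Nat.choose (6 * (k + 1)) (3 * (k + 1)) : ℝ) *
      (32 * ((k : ℝ) + 1) * (3 * (k : ℝ) + 2) * (3 * (k : ℝ) + 1)) =
    (Nat.choose (6 * k) (3 * k) : ℝ) *
      (256 * (2 * (k : ℝ) + 1) * (6 * (k : ℝ) + 1) * (6 * (k : ℝ) + 5)) := by
  have hF3 : ((3 * k)! : ℝ) ≠ 0 := by exact_mod_cast (Nat.factorial_pos _).ne'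
  rw [cast_choose6 (k + 1), cast_choose6 k, fact6, fact3]
  have e1 : (3 * (k : ℝ) + 3) ≠ 0 := by positivity
  have e2 : (3 * (k : ℝ) + 2) ≠ 0 := by positivity
  have e3 : (3 * (k : ℝ) + 1) ≠ 0 := by positivity
  field_simp
  ring

lemma termid (k : ℕ) : sF k + 24 * sG k = sT k - sT (k + 1) := by
  unfold sF sG sT
  have h32 : (32 * ((k : ℝ) + 1) * (3 * (k : ℝ) + 2) * (3 * (k : ℝ) + 1)) ≠ 0 := by positivity
  have hc1 : (Nat.choose (6 * (k + 1)) (3 * (k + 1)) : ℝ) =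
      (Nat.choose (6 * k) (3 * k) : ℝ) *
        (256 * (2 * (k : ℝ) + 1) * (6 * (k : ℝ) + 1) * (6 * (k : ℝ) + 5)) /
        (32 * ((k : ℝ) + 1) * (3 * (k : ℝ) + 2) * (3 * (k : ℝ) + 1)) := by
    rw [eq_div_iff h32]
    linear_combination step' k
  rw [hc1]
  push_cast
  rw [pow_succ]
  have e1 := hne1 k
  have e5 := hne5 k
  have e3 : (256 : ℝ) ^ k ≠ 0 := by positivity
  have f1 : (6 * ((k : ℝ) + 1) - 1) ≠ 0 := by
    have : (6 * ((k : ℝ) + 1) - 1) = 6 * (k : ℝ) + 5 := by ring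
    rw [this]; positivity
  have f5 : (6 * ((k : ℝ) + 1) - 5) ≠ 0 := by
    have : (6 * ((k : ℝ) + 1) - 5) = 6 * (k : ℝ) + 1 := by ring
    rw [this]; positivity
  field_simp
  ring

lemma choose_le_pow2 (n k : ℕ) : Nat.choose n k ≤ 2 ^ n := by
  rcases le_or_gt k n with h | h
  · calc Nat.choose n k ≤ ∑ m ∈ range (n + 1), Nat.choose n m :=
        Finset.single_le_sum (fun i _ => Nat.zero_le _) (by simp [Nat.lt_succ_iff, h])
      _ = 2 ^ n := Nat.sum_range_choose n
  · simp [Nat.choose_eq_zero_of_lt h]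

lemma a_le (k : ℕ) : (Nat.choose (6 * k) (3 * k) : ℝ) / 256 ^ k ≤ (1 / 4 : ℝ) ^ k := by
  have h : (Nat.choose (6 * k) (3 * k) : ℝ) ≤ 64 ^ k := by
    calc (Nat.choose (6 * k) (3 * k) : ℝ) ≤ ((2 : ℕ) : ℝ) ^ (6 * k) := by
          exact_mod_cast choose_le_pow2 (6 * k) (3 * k)
      _ = 64 ^ k := by
          push_cast
          rw [pow_mul]
          norm_num
  rw [div_le_iff₀ (by positivity)]
  calc (Nat.choose (6 * k) (3 * k) : ℝ) ≤ 64 ^ k := h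
    _ = (1 / 4 : ℝ) ^ k * 256 ^ k := by
        rw [← mul_pow]; norm_num

lemma a_nonneg (k : ℕ) : (0 : ℝ) ≤ (Nat.choose (6 * k) (3 * k) : ℝ) / 256 ^ k := by positivity

lemma base_summable : Summable (fun k : ℕ => ((k : ℝ) + 1) * (1 / 4 : ℝ) ^ k) := by
  have h1 : Summable (fun k : ℕ => (k : ℝ) ^ 1 * (1 / 4 : ℝ) ^ k) :=
    summable_pow_mul_geometric_of_norm_lt_one 1
      (by rw [Real.norm_eq_abs, abs_of_nonneg (by norm_num : (0:ℝ) ≤ 1/4)]; norm_num)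
  have h2 : Summable (fun k : ℕ => (1 / 4 : ℝ) ^ k) := by
    have := summable_pow_mul_geometric_of_norm_lt_one (R := ℝ) 0
      (r := 1/4) (by rw [Real.norm_eq_abs, abs_of_nonneg (by norm_num : (0:ℝ) ≤ 1/4)]; norm_num)
    simpa using this
  have := h1.add h2
  refine this.congr fun k => ?_
  ring

lemma denom_ge (k : ℕ) : (1 : ℝ) ≤ |(6 * (k : ℝ) - 1) * (6 * (k : ℝ) - 5)| := by
  match k with
  | 0 => norm_num
  | 1 => norm_num
  | (n + 2) =>
    have hn : (0 : ℝ) ≤ (n : ℝ) := Nat.cast_nonneg n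
    have hpos : (0 : ℝ) < (6 * ((n + 2 : ℕ) : ℝ) - 1) * (6 * ((n + 2 : ℕ) : ℝ) - 5) := by
      push_cast; nlinarith
    rw [abs_of_pos hpos]
    push_cast
    nlinarith

lemma c_bound (k : ℕ) : ‖sF k + 24 * sG k‖ ≤ 31 * (((k : ℝ) + 1) * (1 / 4 : ℝ) ^ k) := by
  have ha := a_le k
  have ha0 := a_nonneg k
  have hq : (0:ℝ) ≤ (1/4:ℝ)^k := by positivity
  have hk0 : (0:ℝ) ≤ (k:ℝ) := Nat.cast_nonneg k
  have hF : ‖sF k‖ ≤ (6 * (k : ℝ) + 1) * (1 / 4 : ℝ) ^ k := by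
    unfold sF
    rw [Real.norm_eq_abs, mul_div_assoc, abs_mul, abs_of_nonneg ha0]
    have h1 : |6 * (k : ℝ) - 1| ≤ 6 * (k : ℝ) + 1 := by
      rw [abs_le]; constructor <;> linarith
    nlinarith [abs_nonneg (6 * (k:ℝ) - 1)]
  have hG : ‖sG k‖ ≤ (k : ℝ) * (1 / 4 : ℝ) ^ k := by
    unfold sG
    have hrw : (k : ℝ) * (Nat.choose (6 * k) (3 * k)) /
        ((6 * (k : ℝ) - 1) * (6 * k - 5) * 256 ^ k) =
        ((k : ℝ) * ((Nat.choose (6 * k) (3 * k) : ℝ) / 256 ^ k)) /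
        ((6 * (k : ℝ) - 1) * (6 * (k : ℝ) - 5)) := by
      have e3 : (256 : ℝ) ^ k ≠ 0 := by positivity
      field_simp
    rw [Real.norm_eq_abs, hrw, abs_div, abs_of_nonneg (mul_nonneg hk0 ha0)]
    have hd := denom_ge k
    have hnum : (k : ℝ) * ((Nat.choose (6 * k) (3 * k) : ℝ) / 256 ^ k) ≤
        (k:ℝ) * (1/4:ℝ)^k := mul_le_mul_of_nonneg_left ha hk0
    rw [div_le_iff₀ (lt_of_lt_of_le one_pos hd)]
    nlinarith [hnum, hd, mul_nonneg hk0 hq, mul_nonneg hk0 ha0]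
  calc ‖sF k + 24 * sG k‖ ≤ ‖sF k‖ + ‖24 * sG k‖ := norm_add_le _ _
    _ = ‖sF k‖ + 24 * ‖sG k‖ := by rw [norm_mul]; norm_num
    _ ≤ 31 * (((k : ℝ) + 1) * (1 / 4 : ℝ) ^ k) := by nlinarith [hF, hG, hq, hk0]

lemma c_summable_norm : Summable (fun k : ℕ => ‖sF k + 24 * sG k‖) := by
  apply Summable.of_nonneg_of_le (fun k => norm_nonneg _) c_bound
  exact base_summable.mul_left 31

lemma t_bound (k : ℕ) : sT k ≤ 64 * (((k : ℝ) + 1) * (1 / 4 : ℝ) ^ k) := by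
  have ha := a_le k
  have ha0 := a_nonneg k
  match k with
  | 0 => unfold sT; norm_num
  | (n + 1) =>
    unfold sT
    have hk : (1 : ℝ) ≤ ((n + 1 : ℕ) : ℝ) := by exact_mod_cast Nat.one_le_iff_ne_zero.mpr (by omega)
    set m : ℝ := ((n + 1 : ℕ) : ℝ) with hm
    have hd : (0 : ℝ) < (6 * m - 1) * (6 * m - 5) := by nlinarith
    have hratio : 32 * m * (3 * m - 1) * (3 * m - 2) ≤ 64 * m * ((6 * m - 1) * (6 * m - 5)) := by
      nlinarith
    have key : 32 * m * (3 * m - 1) * (3 * m - 2) * (Nat.choose (6 * (n+1)) (3 * (n+1)) : ℝ) /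
        ((6 * m - 1) * (6 * m - 5) * 256 ^ (n+1)) ≤
        64 * m * ((Nat.choose (6 * (n+1)) (3 * (n+1)) : ℝ) / 256 ^ (n+1)) := by
      rw [div_le_iff₀ (by positivity)]
      have hcn : (0 : ℝ) ≤ (Nat.choose (6 * (n+1)) (3 * (n+1)) : ℝ) := Nat.cast_nonneg _
      have h256 : (0 : ℝ) < (256 : ℝ) ^ (n+1) := by positivity
      calc 32 * m * (3 * m - 1) * (3 * m - 2) * (Nat.choose (6 * (n+1)) (3 * (n+1)) : ℝ)
          ≤ 64 * m * ((6 * m - 1) * (6 * m - 5)) * (Nat.choose (6 * (n+1)) (3 * (n+1)) : ℝ) :=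
            mul_le_mul_of_nonneg_right hratio hcn
        _ = 64 * m * ((Nat.choose (6 * (n+1)) (3 * (n+1)) : ℝ) / 256 ^ (n+1)) *
            ((6 * m - 1) * (6 * m - 5) * 256 ^ (n+1)) := by field_simp
    calc 32 * m * (3 * m - 1) * (3 * m - 2) * (Nat.choose (6 * (n+1)) (3 * (n+1)) : ℝ) /
        ((6 * m - 1) * (6 * m - 5) * 256 ^ (n+1))
        ≤ 64 * m * ((Nat.choose (6 * (n+1)) (3 * (n+1)) : ℝ) / 256 ^ (n+1)) := key
      _ ≤ 64 * m * (1 / 4 : ℝ) ^ (n+1) := by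
          apply mul_le_mul_of_nonneg_left ha (by nlinarith)
      _ ≤ 64 * ((m + 1) * (1 / 4 : ℝ) ^ (n+1)) := by
          have : (0 : ℝ) ≤ (1 / 4 : ℝ) ^ (n+1) := by positivity
          nlinarith
  
lemma t_nonneg (k : ℕ) : 0 ≤ sT k := by
  match k with
  | 0 => unfold sT; norm_num
  | (n + 1) =>
    unfold sT
    have hk : (1 : ℝ) ≤ ((n + 1 : ℕ) : ℝ) := by exact_mod_cast Nat.one_le_iff_ne_zero.mpr (by omega)
    have hcn : (0 : ℝ) ≤ (Nat.choose (6 * (n+1)) (3 * (n+1)) : ℝ) := Nat.cast_nonneg _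
    set m : ℝ := ((n + 1 : ℕ) : ℝ)
    have h256 : (0 : ℝ) < (256 : ℝ) ^ (n+1) := by positivity
    have h2 : (0:ℝ) ≤ 3*m-1 := by linarith
    have h3 : (0:ℝ) ≤ 3*m-2 := by linarith
    have h4 : (0:ℝ) ≤ 6*m-1 := by linarith
    have h5 : (0:ℝ) ≤ 6*m-5 := by linarith
    have hm : (0:ℝ) ≤ 32*m := by linarith
    apply div_nonneg
    · exact mul_nonneg (mul_nonneg (mul_nonneg hm h2) h3) hcn
    · exact mul_nonneg (mul_nonneg h4 h5) (le_of_lt h256)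

lemma t_tendsto : Tendsto sT atTop (nhds 0) := by
  have hb : Summable (fun k : ℕ => 64 * (((k : ℝ) + 1) * (1 / 4 : ℝ) ^ k)) :=
    base_summable.mul_left 64
  exact squeeze_zero t_nonneg t_bound hb.tendsto_atTop_zero

lemma c_hasSum : HasSum (fun k : ℕ => sF k + 24 * sG k) 0 := by
  rw [hasSum_iff_tendsto_nat_of_summable_norm c_summable_norm]
  have hps : ∀ n : ℕ, ∑ i ∈ range n, (sF i + 24 * sG i) = sT 0 - sT n := by
    intro n
    rw [← Finset.sum_range_sub' sT n]
    exact Finset.sum_congr rfl fun i _ => termid i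
  have ht0 : sT 0 = 0 := by unfold sT; norm_num
  simp only [hps, ht0, zero_sub]
  simpa using t_tendsto.neg

lemma sqrt3_mul : Real.sqrt 3 * Real.sqrt 3 = 3 := Real.mul_self_sqrt (by norm_num)

lemma sqrt3_ne : Real.sqrt 3 ≠ 0 := by
  have := Real.sqrt_pos.mpr (by norm_num : (0:ℝ) < 3)
  linarith

theorem series_stmt_17 :
    HasSum (fun k : ℕ =>
        (6 * (k : ℝ) - 1) * (Nat.choose (6 * k) (3 * k)) / 256 ^ k)
      (-(2 / (3 * Real.sqrt 3)))
    ↔ HasSum (fun k : ℕ =>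
        (k : ℝ) * (Nat.choose (6 * k) (3 * k)) /
          ((6 * (k : ℝ) - 1) * (6 * k - 5) * 256 ^ k))
      (Real.sqrt 3 / 108) := by
  have H0 := c_hasSum
  constructor
  · intro hf
    have hf' : HasSum sF (-(2 / (3 * Real.sqrt 3))) := hf
    have h1 : HasSum (fun k => (sF k + 24 * sG k) - sF k) (0 - -(2 / (3 * Real.sqrt 3))) :=
      H0.sub hf'
    have h2 : HasSum (fun k => 24 * sG k) (2 / (3 * Real.sqrt 3)) := by
      have hfun : (fun k => (sF k + 24 * sG k) - sF k) = fun k => 24 * sG k := by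
        funext k; ring
      rw [hfun] at h1
      convert h1 using 1
      ring
    have h3 := h2.mul_left (1 / 24)
    have hfun : (fun k => (1 / 24 : ℝ) * (24 * sG k)) = sG := by
      funext k; ring
    rw [hfun] at h3
    have hval : (1 / 24 : ℝ) * (2 / (3 * Real.sqrt 3)) = Real.sqrt 3 / 108 := by
      have h0 := sqrt3_ne
      field_simp
      nlinarith [sqrt3_mul, Real.sqrt_nonneg 3]
    rw [hval] at h3
    exact h3
  · intro hg
    have hg' : HasSum sG (Real.sqrt 3 / 108) := hg
    have h1 : HasSum (fun k => (sF k + 24 * sG k) - 24 * sG k)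
        (0 - 24 * (Real.sqrt 3 / 108)) := H0.sub (hg'.mul_left 24)
    have hfun : (fun k => (sF k + 24 * sG k) - 24 * sG k) = sF := by
      funext k; ring
    rw [hfun] at h1
    have hval : (0 : ℝ) - 24 * (Real.sqrt 3 / 108) = -(2 / (3 * Real.sqrt 3)) := by
      have h0 := sqrt3_ne
      field_simp
      nlinarith [sqrt3_mul, Real.sqrt_nonneg 3]
    rw [hval] at h1
    exact h1
end
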